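/- arXiv:1501.07348 — 8 statements merged into one kernel-verified Lean document; each statement's English description precedes it below -/
import Mathlib

section
/- Let G be a finite simple graph and let k be an integer with 2 ≤ k ≤ |V(G)| such that G has at least one (k−1)-subgraph with an edge (so σ*_{k−1}(G) is defined and positive in the relevant regime). Then σ*_k(G) < σ*_{k−1}(G) + 2, i.e., the maximum density of a k-vertex subgraph of G is strictly less than the maximum density of a (k−1)-vertex subgraph of G plus 2. -/
/-! Take a densest `k`-vertex subgraph `H` (there are finitely many subgraphs) with `e` edges and
delete any vertex `v`; if `d` edges of `H` meet `v`, then `d ≤ e` and `d ≤ k - 1`. The claim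
`2e/k < 2(e - d)/(k - 1) + 2` is equivalent to `k d < e + k (k - 1)`, and indeed
`k d = d + (k - 1) d ≤ e + (k - 1)² < e + k (k - 1)`. -/

open Finset

variable {V : Type*}

noncomputable def graphDensity [Fintype V] (G : SimpleGraph V) : ℝ :=
  2 * G.edgeSet.ncard / Fintype.card V

noncomputable def setDensity (G : SimpleGraph V) (A : Set V) : ℝ :=
  2 * (G.induce A).edgeSet.ncard / A.ncard

noncomputable def indDensity (G : SimpleGraph V) (S : Finset V) : ℝ :=
  2 * (G.induce (S : Set V)).edgeSet.ncard / S.card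

noncomputable def subDensity {G : SimpleGraph V} (H : G.Subgraph) : ℝ :=
  2 * H.edgeSet.ncard / H.verts.ncard

noncomputable def maxKDensity (G : SimpleGraph V) (k : ℕ) : ℝ :=
  sSup {x : ℝ | ∃ H : G.Subgraph, H.verts.ncard = k ∧ x = subDensity H}

noncomputable def maxConnKDensity (G : SimpleGraph V) (k : ℕ) : ℝ :=
  sSup {x : ℝ | ∃ H : G.Subgraph, H.verts.ncard = k ∧ H.Connected ∧ x = subDensity H}

noncomputable def maxDensity (G : SimpleGraph V) : ℝ :=
  sSup {x : ℝ | ∃ H : G.Subgraph, H.verts.Nonempty ∧ x = subDensity H}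

def cutCount (G : SimpleGraph V) [DecidableRel G.Adj] (S T : Finset V) : ℕ :=
  ((S ×ˢ T).filter fun p => G.Adj p.1 p.2).card

def IsCompOf (G : SimpleGraph V) (A W : Set V) : Prop :=
  A.Nonempty ∧ A ⊆ W ∧ (G.induce A).Connected ∧
    ∀ B : Set V, A ⊆ B → B ⊆ W → (G.induce B).Connected → B = A

noncomputable def subWDensity {G : SimpleGraph V} (w : Sym2 V → ℝ) (H : G.Subgraph) : ℝ :=
  2 * (∑ᶠ e ∈ H.edgeSet, w e) / H.verts.ncard

noncomputable def indWDensity (G : SimpleGraph V) (w : Sym2 V → ℝ) (S : Finset V) : ℝ :=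
  2 * (∑ᶠ e ∈ {e : Sym2 V | e ∈ G.edgeSet ∧ ∀ v ∈ e, v ∈ S}, w e) / S.card

noncomputable def maxKWDensity (G : SimpleGraph V) (w : Sym2 V → ℝ) (k : ℕ) : ℝ :=
  sSup {x : ℝ | ∃ H : G.Subgraph, H.verts.ncard = k ∧ x = subWDensity w H}

noncomputable def maxConnKWDensity (G : SimpleGraph V) (w : Sym2 V → ℝ) (k : ℕ) : ℝ :=
  sSup {x : ℝ | ∃ H : G.Subgraph, H.verts.ncard = k ∧ H.Connected ∧ x = subWDensity w H}

namespace SimpleGraph.Subgraph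

variable {G : SimpleGraph V}

instance [Finite V] : Finite G.Subgraph :=
  Finite.of_injective (fun H : G.Subgraph => (H.verts, H.Adj)) fun _ _ h =>
    Subgraph.ext (congrArg Prod.fst h) (congrArg Prod.snd h)

theorem edgeSet_deleteVerts_singleton (H : G.Subgraph) (v : V) :
    (H.deleteVerts {v}).edgeSet = H.edgeSet \ H.incidenceSet v := by
  ext e
  refine Sym2.ind (fun a b => ?_) e
  simp only [Subgraph.mem_edgeSet, deleteVerts_adj, Set.mem_sdiff, incidenceSet,
    Set.mem_ofPred_eq, Set.mem_singleton_iff, Sym2.mem_iff, not_and, not_or]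
  constructor
  · rintro ⟨-, ha, -, hb, hab⟩
    exact ⟨hab, fun _ => ⟨Ne.symm ha, Ne.symm hb⟩⟩
  · rintro ⟨hab, hv⟩
    obtain ⟨hva, hvb⟩ := hv hab
    exact ⟨hab.fst_mem, Ne.symm hva, hab.snd_mem, Ne.symm hvb, hab⟩

theorem ncard_incidenceSet_le [Finite V] (H : G.Subgraph) (v : V) :
    (H.incidenceSet v).ncard ≤ (H.verts \ {v}).ncard := by
  have hsub : H.incidenceSet v ⊆ (fun w => s(v, w)) '' (H.verts \ {v}) := by
    rintro e ⟨he, hv⟩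
    obtain ⟨w, rfl⟩ := Sym2.mem_iff_exists.1 hv
    have hvw : H.Adj v w := he
    exact ⟨w, ⟨hvw.snd_mem, hvw.ne.symm⟩, rfl⟩
  exact (Set.ncard_le_ncard hsub).trans (Set.ncard_image_le (Set.toFinite _))

end SimpleGraph.Subgraph

theorem div_lt_div_sub_add_two {n e d : ℝ} (hn : 2 ≤ n) (hdn : d ≤ n - 1) (hde : d ≤ e) :
    2 * e / n < 2 * (e - d) / (n - 1) + 2 := by
  have hn1 : 0 < n - 1 := by linarith
  rw [div_add' _ _ _ hn1.ne', div_lt_div_iff₀ (by linarith) hn1]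
  nlinarith

open SimpleGraph.Subgraph in
theorem subDensity_lt_subDensity_deleteVerts_add_two [Finite V] {G : SimpleGraph V}
    (H : G.Subgraph) {v : V} (hv : v ∈ H.verts) (h2 : 2 ≤ H.verts.ncard) :
    subDensity H < subDensity (H.deleteVerts {v}) + 2 := by
  have hverts : ((H.verts \ {v}).ncard : ℝ) = H.verts.ncard - 1 := by
    rw [Set.ncard_sdiff_singleton_of_mem hv, Nat.cast_pred (by omega)]
  have hedges : ((H.deleteVerts {v}).edgeSet.ncard : ℝ) =
      H.edgeSet.ncard - (H.incidenceSet v).ncard := by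
    rw [edgeSet_deleteVerts_singleton, eq_sub_iff_add_eq]
    exact_mod_cast Set.ncard_sdiff_add_ncard_of_subset (incidenceSet_subset H v)
  have hdeg : ((H.incidenceSet v).ncard : ℝ) ≤ H.verts.ncard - 1 := by
    rw [← hverts]; exact_mod_cast ncard_incidenceSet_le H v
  have hinc : ((H.incidenceSet v).ncard : ℝ) ≤ H.edgeSet.ncard := by
    exact_mod_cast Set.ncard_le_ncard (incidenceSet_subset H v)
  rw [subDensity, subDensity, hedges, deleteVerts_verts, hverts]
  exact div_lt_div_sub_add_two (by exact_mod_cast h2) hdeg hinc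

theorem finite_setOf_subDensity_of_ncard_eq [Finite V] (G : SimpleGraph V) (k : ℕ) :
    {x : ℝ | ∃ H : G.Subgraph, H.verts.ncard = k ∧ x = subDensity H}.Finite :=
  (Set.finite_range (subDensity : G.Subgraph → ℝ)).subset fun _ ⟨H, _, hx⟩ => ⟨H, hx.symm⟩

theorem subDensity_le_maxKDensity [Finite V] {G : SimpleGraph V} (H : G.Subgraph) :
    subDensity H ≤ maxKDensity G H.verts.ncard :=
  le_csSup (finite_setOf_subDensity_of_ncard_eq G _).bddAbove ⟨H, rfl, rfl⟩

theorem exists_subDensity_eq_maxKDensity [Finite V] (G : SimpleGraph V) {k : ℕ}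
    (hk : k ≤ Nat.card V) :
    ∃ H : G.Subgraph, H.verts.ncard = k ∧ subDensity H = maxKDensity G k := by
  obtain ⟨S, -, hS⟩ := Set.exists_subset_card_eq (s := Set.univ) (n := k) (by rwa [Set.ncard_univ])
  have hne : {x : ℝ | ∃ H : G.Subgraph, H.verts.ncard = k ∧ x = subDensity H}.Nonempty :=
    ⟨_, (⊤ : G.Subgraph).induce S, hS, rfl⟩
  obtain ⟨H, hH, hmax⟩ := hne.csSup_mem (finite_setOf_subDensity_of_ncard_eq G k)
  exact ⟨H, hH, hmax.symm⟩

theorem stmt0_general [Fintype V] (G : SimpleGraph V) (k : ℕ) (hk2 : 2 ≤ k)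
    (hkn : k ≤ Fintype.card V) :
    maxKDensity G k < maxKDensity G (k - 1) + 2 := by
  obtain ⟨H, hHk, hHmax⟩ :=
    exists_subDensity_eq_maxKDensity G (k := k) (by rwa [Nat.card_eq_fintype_card])
  obtain ⟨v, hv⟩ : H.verts.Nonempty := Set.nonempty_of_ncard_ne_zero (by omega)
  have hdel : (H.deleteVerts {v}).verts.ncard = k - 1 := by
    rw [SimpleGraph.Subgraph.deleteVerts_verts, Set.ncard_sdiff_singleton_of_mem hv, hHk]
  calc maxKDensity G k = subDensity H := hHmax.symm
    _ < subDensity (H.deleteVerts {v}) + 2 :=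
        subDensity_lt_subDensity_deleteVerts_add_two H hv (hHk ▸ hk2)
    _ ≤ maxKDensity G (k - 1) + 2 := by
        rw [← hdel]; exact add_le_add_left (subDensity_le_maxKDensity _) 2

/-- `σ*_k(G) < σ*_{k-1}(G) + 2`. -/
theorem stmt0 [Fintype V] (G : SimpleGraph V) (k : ℕ) (hk2 : 2 ≤ k)
    (hkn : k ≤ Fintype.card V)
    (hE : ∃ H : G.Subgraph, H.verts.ncard = k - 1 ∧ H.edgeSet.Nonempty) :
    maxKDensity G k < maxKDensity G (k - 1) + 2 :=
  stmt0_general G k hk2 hkn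
end

section
/- Let G be a finite simple graph and let k be an integer with 2 ≤ k ≤ |V(G)|, and assume the maximum density of a (k−1)-subgraph of G is at least 1, i.e. σ*_{k−1}(G) ≥ 1. Then σ*_k(G) ≤ 3·σ*_{k−1}(G). -/
open Finset

variable {V : Type*}

lemma my_edge_subset {G : SimpleGraph V} (H : G.Subgraph) (v : V) :
    H.edgeSet ⊆ (H.deleteVerts {v}).edgeSet ∪ ((fun u => s(v,u)) '' (H.neighborSet v)) := by
  intro e he
  induction e using Sym2.ind with
  | _ a b =>
    rw [SimpleGraph.Subgraph.mem_edgeSet] at he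
    by_cases ha : a = v
    · subst ha; exact Or.inr ⟨b, he, rfl⟩
    by_cases hb : b = v
    · subst hb; exact Or.inr ⟨a, he.symm, Sym2.eq_swap⟩
    refine Or.inl ?_
    rw [SimpleGraph.Subgraph.mem_edgeSet, SimpleGraph.Subgraph.deleteVerts_adj]
    exact ⟨he.fst_mem, by simpa using ha, he.snd_mem, by simpa using hb, he⟩

lemma my_edge_count [Fintype V] {G : SimpleGraph V} (H : G.Subgraph) (v : V) (hv : v ∈ H.verts) :
    H.edgeSet.ncard ≤ (H.deleteVerts {v}).edgeSet.ncard + (H.verts.ncard - 1) := by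
  classical
  have h1 : H.edgeSet.ncard ≤
      ((H.deleteVerts {v}).edgeSet ∪ ((fun u => s(v,u)) '' (H.neighborSet v))).ncard :=
    Set.ncard_le_ncard (my_edge_subset H v) (Set.toFinite _)
  have h2 : ((H.deleteVerts {v}).edgeSet ∪ ((fun u => s(v,u)) '' (H.neighborSet v))).ncard ≤
      (H.deleteVerts {v}).edgeSet.ncard + ((fun u => s(v,u)) '' (H.neighborSet v)).ncard :=
    Set.ncard_union_le _ _
  have h3 : ((fun u => s(v,u)) '' (H.neighborSet v)).ncard ≤ (H.neighborSet v).ncard :=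
    Set.ncard_image_le (Set.toFinite _)
  have h4 : (H.neighborSet v).ncard ≤ (H.verts \ {v}).ncard := by
    refine Set.ncard_le_ncard ?_ (Set.toFinite _)
    intro u hu
    exact ⟨hu.snd_mem, by simpa using (H.adj_sub hu).ne'⟩
  have h5 : (H.verts \ {v}).ncard = H.verts.ncard - 1 :=
    Set.ncard_diff_singleton_of_mem hv
  omega


/-- if `σ*_{k-1}(G) ≥ 1` then `σ*_k(G) ≤ 3·σ*_{k-1}(G)`. -/
theorem stmt1 [Fintype V] (G : SimpleGraph V) (k : ℕ) (hk2 : 2 ≤ k)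
    (hkn : k ≤ Fintype.card V) (h1 : 1 ≤ maxKDensity G (k - 1)) :
    maxKDensity G k ≤ 3 * maxKDensity G (k - 1) := by
  classical
  set M := maxKDensity G (k - 1) with hM
  have hM0 : (0:ℝ) ≤ M := le_trans zero_le_one h1
  have hbdd : BddAbove {x : ℝ | ∃ H : G.Subgraph, H.verts.ncard = k - 1 ∧ x = subDensity H} := by
    refine ⟨2 * G.edgeSet.ncard, ?_⟩
    rintro x ⟨H, hc, rfl⟩
    have hk1 : (1:ℝ) ≤ (H.verts.ncard : ℝ) := by
      rw [hc]; exact_mod_cast Nat.one_le_iff_ne_zero.mpr (by omega)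
    have he : (H.edgeSet.ncard : ℝ) ≤ (G.edgeSet.ncard : ℝ) := by
      exact_mod_cast Set.ncard_le_ncard H.edgeSet_subset (Set.toFinite _)
    calc subDensity H = 2 * H.edgeSet.ncard / H.verts.ncard := rfl
      _ ≤ 2 * H.edgeSet.ncard / 1 := by
          apply div_le_div_of_nonneg_left _ one_pos hk1 <;> positivity
      _ ≤ 2 * G.edgeSet.ncard := by rw [div_one]; linarith
  apply Real.sSup_le _ (by linarith)
  rintro x ⟨H, hc, rfl⟩
  obtain ⟨v, hv⟩ : H.verts.Nonempty := by
    rw [← Set.ncard_pos (Set.toFinite _)] ; omega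
  set H' := H.deleteVerts {v} with hH'
  have hc' : H'.verts.ncard = k - 1 := by
    rw [hH', SimpleGraph.Subgraph.deleteVerts_verts,
      Set.ncard_diff_singleton_of_mem hv, hc]
  have hle : subDensity H' ≤ M := le_csSup hbdd ⟨H', hc', rfl⟩
  have hcount := my_edge_count H v hv
  -- real arithmetic
  have hkR : ((k:ℝ)) ≥ 2 := by exact_mod_cast hk2
  have hk1R : ((k - 1 : ℕ) : ℝ) = (k:ℝ) - 1 := by
    rw [Nat.cast_sub (by omega)]; norm_num
  have heR : (H.edgeSet.ncard : ℝ) ≤ (H'.edgeSet.ncard : ℝ) + ((k:ℝ) - 1) := by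
    rw [hc] at hcount
    have := (Nat.cast_le (α := ℝ)).mpr hcount
    push_cast [Nat.cast_sub (by omega : 1 ≤ k)] at this
    linarith
  have hd' : subDensity H' = 2 * (H'.edgeSet.ncard : ℝ) / ((k:ℝ) - 1) := by
    rw [subDensity, hc', hk1R]
  have hd : subDensity H = 2 * (H.edgeSet.ncard : ℝ) / (k:ℝ) := by
    rw [subDensity, hc]
  rw [hd]
  have he'0 : (0:ℝ) ≤ (H'.edgeSet.ncard : ℝ) := Nat.cast_nonneg _
  have hden : (0:ℝ) < (k:ℝ) - 1 := by linarith
  have hkpos : (0:ℝ) < (k:ℝ) := by linarith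
  have hle' : 2 * (H'.edgeSet.ncard : ℝ) ≤ M * ((k:ℝ) - 1) := by
    rw [hd', div_le_iff₀ hden] at hle; linarith
  rw [div_le_iff₀ hkpos]
  nlinarith [heR, hle', hM0, h1, hkR, mul_nonneg hM0 hden.le]
end

section
/- Let G be a finite simple graph, let k ≥ 3 be an integer, let G₁ be a connected subgraph of G on exactly k vertices, and let G₂ be a nonempty connected subgraph of G₁. Then σ(G₁) ≥ σ(G₂)/√k. -/
/-!
Write `m = |V(G₂)|` and `eᵢ = |E(Gᵢ)|`; the claim is `e₂ √k ≤ e₁ m`. If `m ≥ √k` this follows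
from `e₂ ≤ e₁`. Otherwise `G₂` is small: `2 e₂ ≤ m (m - 1) ≤ m (√k - 1)`, while the connected
`G₁` has `e₁ ≥ k - 1`, and `(√k - 1) √k ≤ 2 (k - 1)`.
-/

open Finset

variable {V : Type*}

namespace SimpleGraph.Subgraph

variable {G : SimpleGraph V}

lemma ncard_edgeSet_coe (H : G.Subgraph) : H.coe.edgeSet.ncard = H.edgeSet.ncard := by
  rw [← image_coe_edgeSet_coe, Set.ncard_image_of_injective _
    (Sym2.map.injective Subtype.val_injective)]

lemma Connected.ncard_verts_le_ncard_edgeSet_add_one {H : G.Subgraph} (h : H.Connected) :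
    H.verts.ncard ≤ H.edgeSet.ncard + 1 := by
  have := h.coe.card_vert_le_card_edgeSet_add_one
  rwa [Nat.card_coe_set_eq, Nat.card_coe_set_eq, ncard_edgeSet_coe] at this

lemma two_mul_ncard_edgeSet_le (H : G.Subgraph) (hH : H.verts.Finite) :
    2 * H.edgeSet.ncard ≤ H.verts.ncard * (H.verts.ncard - 1) := by
  classical
  have := hH.fintype
  have h := H.coe.card_edgeFinset_le_card_choose_two
  rw [edgeFinset_card, ← Nat.card_eq_fintype_card, ← Nat.card_eq_fintype_card,
    Nat.card_coe_set_eq, Nat.card_coe_set_eq, ncard_edgeSet_coe,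
    Nat.choose_two_right] at h
  have := Nat.div_mul_cancel (Nat.even_mul_pred_self H.verts.ncard).two_dvd
  omega

lemma ncard_edgeSet_mul_sqrt_le [Finite V] {H₁ H₂ : G.Subgraph} (h₁ : H₁.Connected)
    (h₂₁ : H₂ ≤ H₁) (h₂ : H₂.verts.Nonempty) :
    (H₂.edgeSet.ncard : ℝ) * √(H₁.verts.ncard : ℝ) ≤ H₁.edgeSet.ncard * H₂.verts.ncard := by
  have hm : 1 ≤ H₂.verts.ncard := (Set.ncard_pos H₂.verts.toFinite).mpr h₂
  have hm1 : (1 : ℝ) ≤ H₂.verts.ncard := by exact_mod_cast hm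
  have he : (H₂.edgeSet.ncard : ℝ) ≤ H₁.edgeSet.ncard := by
    exact_mod_cast Set.ncard_le_ncard (edgeSet_mono h₂₁)
  have hn : (H₁.verts.ncard : ℝ) ≤ H₁.edgeSet.ncard + 1 := by
    exact_mod_cast h₁.ncard_verts_le_ncard_edgeSet_add_one
  have hch : 2 * (H₂.edgeSet.ncard : ℝ) ≤ H₂.verts.ncard * (H₂.verts.ncard - 1) := by
    have := H₂.two_mul_ncard_edgeSet_le H₂.verts.toFinite
    rify [hm] at this
    exact this
  set m : ℝ := (H₂.verts.ncard : ℝ)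
  set e₁ : ℝ := (H₁.edgeSet.ncard : ℝ)
  set e₂ : ℝ := (H₂.edgeSet.ncard : ℝ)
  set s := √(H₁.verts.ncard : ℝ)
  have hss : s * s = H₁.verts.ncard := Real.mul_self_sqrt (Nat.cast_nonneg _)
  have hs : 0 ≤ s := Real.sqrt_nonneg _
  rcases le_total s m with hsm | hms
  · exact mul_le_mul he hsm hs (Nat.cast_nonneg _)
  · calc e₂ * s ≤ m * (m - 1) / 2 * s := by gcongr; linarith
      _ ≤ m * (s - 1) / 2 * s := by gcongr
      _ = m * (s * s - s) / 2 := by ring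
      _ ≤ m * (s * s - 1) := by nlinarith [hm1.trans hms]
      _ ≤ e₁ * m := by rw [hss, mul_comm]; gcongr; linarith

end SimpleGraph.Subgraph

theorem stmt3_general [Fintype V] (G : SimpleGraph V) (k : ℕ)
    (H1 H2 : G.Subgraph) (h1k : H1.verts.ncard = k) (h1c : H1.Connected)
    (h21 : H2 ≤ H1) (h2ne : H2.verts.Nonempty) :
    subDensity H1 ≥ subDensity H2 / Real.sqrt k := by
  have hm : (0 : ℝ) < H2.verts.ncard := by
    exact_mod_cast (Set.ncard_pos H2.verts.toFinite).mpr h2ne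
  have hk : (0 : ℝ) < k := by
    rw [← h1k]; exact_mod_cast (Set.ncard_pos H1.verts.toFinite).mpr (h2ne.mono h21.1)
  have key := SimpleGraph.Subgraph.ncard_edgeSet_mul_sqrt_le h1c h21 h2ne
  rw [h1k] at key
  unfold subDensity
  rw [h1k, ge_iff_le, div_div, div_le_div_iff₀ (by positivity) hk]
  calc 2 * (H2.edgeSet.ncard : ℝ) * k = 2 * (H2.edgeSet.ncard * √k) * √k := by
        linear_combination (-2 * (H2.edgeSet.ncard : ℝ)) * Real.mul_self_sqrt hk.le
    _ ≤ 2 * (H1.edgeSet.ncard * H2.verts.ncard) * √k := by gcongr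
    _ = 2 * H1.edgeSet.ncard * (H2.verts.ncard * √k) := by ring

/-- a connected `k`-subgraph is at least `1/√k` as dense as any
nonempty connected subgraph of it. -/
theorem stmt3 [Fintype V] (G : SimpleGraph V) (k : ℕ) (hk : 3 ≤ k)
    (H1 H2 : G.Subgraph) (h1k : H1.verts.ncard = k) (h1c : H1.Connected)
    (h21 : H2 ≤ H1) (h2ne : H2.verts.Nonempty) (h2c : H2.Connected) :
    subDensity H1 ≥ subDensity H2 / Real.sqrt k :=
  stmt3_general G k H1 H2 h1k h1c h21 h2ne
end

section
/- Let G be a connected finite simple graph on n vertices, let S be a nonempty proper subset of V(G) such that the induced subgraph G[S] is connected, and let j be an integer with 1 ≤ j ≤ n − |S|. Then there exists a set S* ⊆ V(G)∖S with |S*| = j such that the induced subgraph G[S ∪ S*] is connected and the number of edges of G with one end in S and the other end in S* is at least (j/n) times the number of edges of G with one end in S and the other end in V(G)∖S. -/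
/-!
Greedy argument. Let `d v` be the number of neighbours of `v` in `S`, so that
`cutCount G S T = ∑ v ∈ T, d v`. Grow `T ⊆ Sᶜ` one vertex at a time, keeping `G[S ∪ T]` connected
and the invariant `|T| · cutCount G S Sᶜ ≤ |Sᶜ| · cutCount G S T`. Among the unused vertices
`R = Sᶜ \ T`, one of largest `d` has `d` at least the average
`(cutCount G S Sᶜ - cutCount G S T) / |R|`, which is exactly what the invariant needs, and it is
adjacent to `S` when `d > 0`. If the maximum is `0`, any vertex of `R` adjacent to `S ∪ T` (one
exists since `G` is connected) will do.
-/

open Finset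

variable {V : Type*}

lemma cutCount_eq_sum (G : SimpleGraph V) [DecidableRel G.Adj] (S T : Finset V) :
    cutCount G S T = ∑ v ∈ T, #{u ∈ S | G.Adj u v} := by
  rw [cutCount, card_filter, sum_product_right]
  simp only [card_filter]

namespace SimpleGraph

lemma Connected.induce_insert_of_adj {G : SimpleGraph V} {W : Set V} (hW : (G.induce W).Connected)
    {u v : V} (hu : u ∈ W) (huv : G.Adj u v) : (G.induce (insert v W)).Connected := by
  have hinsert : insert v W = W ∪ {u, v} := by
    ext x
    simp only [Set.mem_insert_iff, Set.mem_union, Set.mem_singleton_iff]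
    constructor
    · rintro (rfl | hx) <;> tauto
    · rintro (hx | rfl | rfl) <;> tauto
  rw [hinsert]
  exact induce_union_connected hW.preconnected
    (induce_pair_connected_of_adj huv).preconnected ⟨u, hu, by simp⟩

lemma Connected.exists_adj_mem_not_mem {G : SimpleGraph V} (hG : G.Connected) {W : Set V}
    {w x : V} (hw : w ∈ W) (hx : x ∉ W) : ∃ u v, u ∈ W ∧ v ∉ W ∧ G.Adj u v := by
  obtain ⟨p⟩ := hG.preconnected w x
  obtain ⟨d, -, hd₁, hd₂⟩ := p.exists_boundary_dart W hw hx
  exact ⟨d.fst, d.snd, hd₁, hd₂, d.adj⟩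

end SimpleGraph

lemma Finset.exists_mem_and_sum_le_card_mul {R : Finset V} (d : V → ℕ) {P : V → Prop}
    (hpos : ∀ v ∈ R, 0 < d v → P v) (hex : ∃ v ∈ R, P v) :
    ∃ v ∈ R, P v ∧ ∑ w ∈ R, d w ≤ #R * d v := by
  obtain ⟨v₀, hv₀, hP₀⟩ := hex
  obtain ⟨v, hv, hmax⟩ := exists_max_image R d ⟨v₀, hv₀⟩
  have hsum : ∑ w ∈ R, d w ≤ #R * d v := by
    simpa using sum_le_sum hmax
  rcases Nat.eq_zero_or_pos (d v) with hzero | hvpos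
  · exact ⟨v₀, hv₀, hP₀, hsum.trans (by simp [hzero])⟩
  · exact ⟨v, hv, hpos v hv hvpos, hsum⟩

lemma greedy_ratio_step {i m c C d : ℕ} (him : i < m) (hinv : i * C ≤ m * c)
    (hstep : C ≤ c + (m - i) * d) : (i + 1) * C ≤ m * (c + d) := by
  obtain ⟨r, rfl⟩ := Nat.exists_eq_add_of_lt him
  rw [show i + r + 1 - i = r + 1 by omega] at hstep
  nlinarith [Nat.mul_le_mul_left r hinv]

lemma exists_connected_attachment_cutCount_ge [Fintype V] [DecidableEq V] (G : SimpleGraph V)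
    [DecidableRel G.Adj] (hG : G.Connected) (S : Finset V)
    (hScon : (G.induce (S : Set V)).Connected) {i : ℕ} (hi : i ≤ #Sᶜ) :
    ∃ T ⊆ Sᶜ, #T = i ∧ (G.induce ((S ∪ T : Finset V) : Set V)).Connected ∧
      i * cutCount G S Sᶜ ≤ #Sᶜ * cutCount G S T := by
  induction i with
  | zero => exact ⟨∅, empty_subset _, rfl, by rwa [union_empty], by simp⟩
  | succ i ih =>
    obtain ⟨T, hTS, rfl, hTcon, hinv⟩ := ih (by omega)
    set R := Sᶜ \ T
    have hRcard : #R = #Sᶜ - #T := card_sdiff_of_subset hTS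
    have hsplit : cutCount G S Sᶜ = cutCount G S T + ∑ v ∈ R, #{u ∈ S | G.Adj u v} := by
      rw [cutCount_eq_sum, cutCount_eq_sum, ← sum_sdiff hTS, add_comm]
    have hadj_of_pos : ∀ v ∈ R, 0 < #{u ∈ S | G.Adj u v} → ∃ u ∈ S ∪ T, G.Adj u v := by
      intro v _ hv
      obtain ⟨u, hu⟩ := card_pos.mp hv
      exact ⟨u, mem_union_left _ (mem_filter.mp hu).1, (mem_filter.mp hu).2⟩
    have hboundary : ∃ v ∈ R, ∃ u ∈ S ∪ T, G.Adj u v := by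
      obtain ⟨x, hx⟩ : R.Nonempty := card_pos.mp (by omega)
      obtain ⟨s, hs⟩ := hScon.nonempty
      obtain ⟨u, v, hu, hv, huv⟩ := hG.exists_adj_mem_not_mem
        (W := ((S ∪ T : Finset V) : Set V)) (w := s) (x := x) (by simp_all) (by simp_all [R])
      exact ⟨v, by simp_all [R], u, hu, huv⟩
    obtain ⟨v, hvR, ⟨u, huST, huv⟩, hvavg⟩ :=
      exists_mem_and_sum_le_card_mul (fun v => #{u ∈ S | G.Adj u v}) hadj_of_pos hboundary
    have hvT : v ∉ T := (mem_sdiff.mp hvR).2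
    refine ⟨insert v T, insert_subset (mem_sdiff.mp hvR).1 hTS, card_insert_of_notMem hvT, ?_, ?_⟩
    · rw [union_insert, coe_insert]
      exact hTcon.induce_insert_of_adj huST huv
    · rw [cutCount_eq_sum G S (insert v T), sum_insert hvT, ← cutCount_eq_sum,
        add_comm _ (cutCount G S T)]
      exact greedy_ratio_step (by omega) hinv
        (by rw [hsplit, ← hRcard]; exact Nat.add_le_add_left hvavg _)

theorem stmt5_general [Fintype V] [DecidableEq V] (G : SimpleGraph V) [DecidableRel G.Adj]
    (hG : G.Connected) (S : Finset V)
    (hScon : (G.induce (S : Set V)).Connected) (j : ℕ)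
    (hjn : j ≤ Fintype.card V - S.card) :
    ∃ T : Finset V, T ⊆ Sᶜ ∧ T.card = j ∧
      (G.induce ((S ∪ T : Finset V) : Set V)).Connected ∧
      (cutCount G S T : ℝ) ≥ ((j : ℝ) / (Fintype.card V : ℝ)) * (cutCount G S Sᶜ : ℝ) := by
  obtain ⟨T, hTS, hTcard, hTcon, hcut⟩ :=
    exists_connected_attachment_cutCount_ge G hG S hScon (i := j) (by rwa [card_compl])
  refine ⟨T, hTS, hTcard, hTcon, ?_⟩
  have hn : (0 : ℝ) < Fintype.card V := by
    obtain ⟨s, -⟩ := hScon.nonempty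
    exact_mod_cast Fintype.card_pos_iff.mpr ⟨s⟩
  have hkey : (j : ℝ) * cutCount G S Sᶜ ≤ Fintype.card V * cutCount G S T := by
    exact_mod_cast hcut.trans (Nat.mul_le_mul_right _ (card_le_univ Sᶜ))
  rw [ge_iff_le, div_mul_eq_mul_div, div_le_iff₀ hn]
  linarith

/-- greedy attachment — there is a `j`-attachment `S*` of `S` keeping
`G[S ∪ S*]` connected and capturing a `j/n` fraction of the edges leaving `S`. -/
theorem stmt5 [Fintype V] [DecidableEq V] (G : SimpleGraph V) [DecidableRel G.Adj]
    (hG : G.Connected) (S : Finset V) (hSne : S.Nonempty) (hSp : S ≠ Finset.univ)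
    (hScon : (G.induce (S : Set V)).Connected) (j : ℕ) (hj1 : 1 ≤ j)
    (hjn : j ≤ Fintype.card V - S.card) :
    ∃ T : Finset V, T ⊆ Sᶜ ∧ T.card = j ∧
      (G.induce ((S ∪ T : Finset V) : Set V)).Connected ∧
      (cutCount G S T : ℝ) ≥ ((j : ℝ) / (Fintype.card V : ℝ)) * (cutCount G S Sᶜ : ℝ) :=
  stmt5_general G hG S hScon j hjn
end

section
/- Let k ≥ 2 be an even integer and let G' be a connected finite simple graph on N > k vertices in which every vertex v satisfies d_{G'}(v) ≥ σ(G')/2 (equivalently, G' has no removable vertices). Then there exists a set S of exactly k vertices of G' such that the induced subgraph G'[S] is connected and σ(G'[S]) ≥ (k/(4N))·σ(G'). -/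
open Finset

variable {V : Type*}

/-!
Greedy growth. Let `δ = σ(G)/2` bound all degrees from below and grow a connected set `S`
one vertex at a time, always adding an outside vertex with the most neighbours in `S`. With
`i = |S|` and `x = 2 e(S)`, the degree sum gives at least `iδ - x` edges leaving `S`, so the
chosen vertex has at least `(iδ - x)/(N - i)` neighbours in `S`; this preserves the invariant
`x (N - 1) ≥ δ i (i - 1)`. At `i = k` it reads `σ(G[S]) ≥ σ(G) (k - 1)/(2(N - 1))`, which is at
least `k σ(G)/(4N)` because `N (k - 2) + k ≥ 0`.
-/

namespace SimpleGraph

variable [Fintype V] [DecidableEq V] (G : SimpleGraph V) [DecidableRel G.Adj]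

theorem card_interedges_eq_sum_card_neighborFinset_inter (s t : Finset V) :
    #(G.interedges s t) = ∑ v ∈ s, #(G.neighborFinset v ∩ t) := by
  rw [interedges_def, card_filter, sum_product]
  refine sum_congr rfl fun v _ => ?_
  rw [← card_filter, neighborFinset_eq_filter, filter_inter]
  simp

theorem two_mul_ncard_edgeSet_induce (s : Finset V) :
    2 * (G.induce (s : Set V)).edgeSet.ncard = #(G.interedges s s) := by
  rw [Set.ncard_eq_toFinset_card', ← edgeFinset, ← sum_degrees_eq_twice_card_edges,
    card_interedges_eq_sum_card_neighborFinset_inter,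
    ← sum_finset_coe (fun v => #(G.neighborFinset v ∩ s))]
  refine sum_congr rfl fun v _ => ?_
  rw [← card_neighborFinset_eq_degree]
  convert congrArg card (map_neighborFinset_induce (G := G) (s := (s : Set V)) v) using 1
  · rw [card_map]; congr!
  · simp

omit [Fintype V] [DecidableEq V] in
theorem card_interedges_comm (s t : Finset V) :
    #(G.interedges s t) = #(G.interedges t s) :=
  have := G.symm
  Rel.card_interedges_comm s t

theorem card_interedges_insert_left {u : V} {s : Finset V} (hu : u ∉ s) (t : Finset V) :
    #(G.interedges (insert u s) t) = #(G.neighborFinset u ∩ t) + #(G.interedges s t) := by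
  simp only [card_interedges_eq_sum_card_neighborFinset_inter, sum_insert hu]

theorem card_interedges_insert_self {u : V} {s : Finset V} (hu : u ∉ s) :
    #(G.interedges (insert u s) (insert u s)) =
      #(G.interedges s s) + 2 * #(G.neighborFinset u ∩ s) := by
  rw [card_interedges_insert_left G hu, card_interedges_comm G s,
    card_interedges_insert_left G hu, inter_insert_of_notMem (G.notMem_neighborFinset_self u)]
  ring

theorem sum_degree_eq_card_interedges_add (s : Finset V) :
    ∑ v ∈ s, G.degree v = #(G.interedges s s) + #(G.interedges sᶜ s) := by
  rw [card_interedges_comm G sᶜ, card_interedges_eq_sum_card_neighborFinset_inter,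
    card_interedges_eq_sum_card_neighborFinset_inter, ← sum_add_distrib]
  refine sum_congr rfl fun v _ => ?_
  rw [← card_neighborFinset_eq_degree, ← card_inter_add_card_sdiff _ s, sdiff_eq_inter_compl]

omit [Fintype V] [DecidableRel G.Adj] in
theorem connected_induce_insert {s : Finset V} (hs : (G.induce (s : Set V)).Connected)
    {u v : V} (hv : v ∈ s) (huv : G.Adj u v) :
    (G.induce ((insert u s : Finset V) : Set V)).Connected := by
  rw [coe_insert, Set.insert_eq]
  refine connected_induce_union ?_ hs.preconnected rfl hv huv
  rw [induce_singleton_eq_top]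
  exact connected_top.preconnected

theorem exists_notMem_card_interedges_compl_le (hG : G.Connected) {s : Finset V}
    (hs : s.Nonempty) (hs' : sᶜ.Nonempty) :
    ∃ u ∉ s, (G.neighborFinset u ∩ s).Nonempty ∧
      #(G.interedges sᶜ s) ≤ #sᶜ * #(G.neighborFinset u ∩ s) := by
  obtain ⟨w, hw⟩ := hs
  obtain ⟨x, hx⟩ := hs'
  obtain ⟨d, -, hd, hd'⟩ :=
    (hG.preconnected x w).some.exists_boundary_dart (sᶜ : Finset V) hx (by simpa)
  obtain ⟨u, hu, hmax⟩ :=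
    exists_max_image sᶜ (fun u => #(G.neighborFinset u ∩ s)) ⟨d.fst, hd⟩
  refine ⟨u, mem_compl.1 hu, ?_, ?_⟩
  · refine card_pos.1 (lt_of_lt_of_le (card_pos.2 ⟨d.snd, ?_⟩) (hmax d.fst hd))
    simpa [d.adj] using hd'
  · rw [card_interedges_eq_sum_card_neighborFinset_inter, ← smul_eq_mul]
    exact sum_le_card_nsmul _ _ _ hmax

variable {G}

theorem exists_connected_induce_insert_of_le_degree (hG : G.Connected) {δ : ℝ}
    (hδ : ∀ v, δ ≤ G.degree v) {s : Finset V} (hs : (G.induce (s : Set V)).Connected)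
    (hcard : #s + 2 ≤ Fintype.card V)
    (hdense : δ * (#s * (#s - 1)) ≤ #(G.interedges s s) * (Fintype.card V - 1)) :
    ∃ u ∉ s, (G.induce ((insert u s : Finset V) : Set V)).Connected ∧
      δ * ((#s + 1) * #s) ≤ #(G.interedges (insert u s) (insert u s)) * (Fintype.card V - 1) := by
  have hcompl : sᶜ.Nonempty := card_pos.1 (by rw [card_compl]; omega)
  obtain ⟨u, hu, ⟨v, hv⟩, hcut⟩ :=
    G.exists_notMem_card_interedges_compl_le hG (nonempty_coe_sort.1 hs.nonempty) hcompl
  rw [mem_inter, mem_neighborFinset] at hv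
  refine ⟨u, hu, G.connected_induce_insert hs hv.2 hv.1, ?_⟩
  have hdeg : #s * δ ≤ #(G.interedges s s) + #(G.interedges sᶜ s) := by
    have := card_nsmul_le_sum s _ _ (fun v _ => hδ v)
    rw [nsmul_eq_mul] at this
    exact_mod_cast this.trans_eq (by exact_mod_cast G.sum_degree_eq_card_interedges_add s)
  have hcut' :
      (#(G.interedges sᶜ s) : ℝ) ≤ (Fintype.card V - #s) * #(G.neighborFinset u ∩ s) := by
    rw [← Nat.cast_sub (card_le_univ s), ← card_compl]
    exact_mod_cast hcut
  have hN : (#s : ℝ) + 2 ≤ Fintype.card V := by exact_mod_cast hcard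
  rw [card_interedges_insert_self G hu]
  push_cast
  refine le_of_mul_le_mul_left ?_ (by linarith : (0 : ℝ) < Fintype.card V - #s)
  -- `(i - 1)(N - i - 2) + 2(N - 1) = (N - i)(i + 1)`
  nlinarith [mul_le_mul_of_nonneg_left hdense (by linarith : (0 : ℝ) ≤ Fintype.card V - #s - 2)]

theorem exists_connected_induce_card_eq_of_le_degree (hG : G.Connected) {δ : ℝ}
    (hδ : ∀ v, δ ≤ G.degree v) {k : ℕ} (hk : 1 ≤ k) (hkN : k < Fintype.card V) :
    ∃ s : Finset V, #s = k ∧ (G.induce (s : Set V)).Connected ∧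
      δ * (k * (k - 1)) ≤ #(G.interedges s s) * (Fintype.card V - 1) := by
  induction k, hk using Nat.le_induction with
  | base =>
    obtain ⟨v⟩ := Fintype.card_pos_iff.1 (by omega : 0 < Fintype.card V)
    refine ⟨{v}, card_singleton v, ?_, ?_⟩
    · rw [coe_singleton, induce_singleton_eq_top]
      exact connected_top
    · have : (1 : ℝ) ≤ Fintype.card V := by exact_mod_cast hkN.le
      simp only [Nat.cast_one, sub_self, mul_zero]
      exact mul_nonneg (Nat.cast_nonneg _) (by linarith)
  | succ i _ ih =>
    obtain ⟨s, rfl, hs, hdense⟩ := ih (by omega)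
    obtain ⟨u, hu, hconn, hdense'⟩ :=
      exists_connected_induce_insert_of_le_degree hG hδ hs (by omega) hdense
    refine ⟨insert u s, card_insert_of_notMem hu, hconn, ?_⟩
    push_cast
    simpa using hdense'

end SimpleGraph

open SimpleGraph

theorem graphDensity_nonneg [Fintype V] (G : SimpleGraph V) : 0 ≤ graphDensity G := by
  unfold graphDensity
  positivity

theorem stmt6_general [Fintype V] [DecidableEq V] (G : SimpleGraph V) [DecidableRel G.Adj]
    (k : ℕ) (hk2 : 2 ≤ k) (hG : G.Connected)
    (hN : k < Fintype.card V)
    (hdeg : ∀ v : V, (G.degree v : ℝ) ≥ graphDensity G / 2) :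
    ∃ S : Finset V, S.card = k ∧ (G.induce (S : Set V)).Connected ∧
      indDensity G S ≥ ((k : ℝ) / (4 * (Fintype.card V : ℝ))) * graphDensity G := by
  obtain ⟨S, hcard, hconn, hdense⟩ :=
    exists_connected_induce_card_eq_of_le_degree hG hdeg (by omega : 1 ≤ k) hN
  refine ⟨S, hcard, hconn, ?_⟩
  have hedges : 2 * ((G.induce (S : Set V)).edgeSet.ncard : ℝ) = #(G.interedges S S) := by
    exact_mod_cast two_mul_ncard_edgeSet_induce G S
  have hk : (2 : ℝ) ≤ k := by exact_mod_cast hk2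
  have hkN : (k : ℝ) + 1 ≤ Fintype.card V := by exact_mod_cast hN
  have hσ := graphDensity_nonneg G
  rw [indDensity, hedges, hcard, ge_iff_le, div_mul_eq_mul_div,
    div_le_div_iff₀ (by linarith) (by linarith)]
  refine le_of_mul_le_mul_right ?_ (by linarith : (0 : ℝ) < Fintype.card V - 1)
  nlinarith [mul_nonneg (mul_nonneg hσ (by linarith : (0 : ℝ) ≤ k))
    (by nlinarith : (0 : ℝ) ≤ (Fintype.card V) * (k - 2) + k)]

/-- a connected graph on `N > k` vertices with no removable vertices
(min degree at least `σ(G')/2`) has a connected `k`-subgraph of density at least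
`(k/(4N))·σ(G')`. -/
theorem stmt6 [Fintype V] [DecidableEq V] (G : SimpleGraph V) [DecidableRel G.Adj]
    (k : ℕ) (hk2 : 2 ≤ k) (hke : Even k) (hG : G.Connected)
    (hN : k < Fintype.card V)
    (hdeg : ∀ v : V, (G.degree v : ℝ) ≥ graphDensity G / 2) :
    ∃ S : Finset V, S.card = k ∧ (G.induce (S : Set V)).Connected ∧
      indDensity G S ≥ ((k : ℝ) / (4 * (Fintype.card V : ℝ))) * graphDensity G :=
  stmt6_general G k hk2 hG hN hdeg
end

section
/- Let G be a connected finite simple graph on n vertices and let k be an even integer with 4 ≤ k ≤ n. Then there exists a set S of exactly k vertices of G such that the induced subgraph G[S] is connected and σ*_k(G) ≤ (12 n²/k²)·σ(G[S]); that is, G contains a connected k-vertex subgraph whose density is at least k²/(12 n²) times the maximum density over all k-vertex subgraphs of G. -/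
open Finset

variable {V : Type*}

/-!
A connected graph on `n` vertices has a closed walk of length at most `2(n - 1)` through every
vertex: each missing vertex is picked up by a detour `w → v → w`. Cut the vertex sequence of
this walk into blocks of `h = k / 2` consecutive positions; this gives `q + 1` connected blocks
with `q h ≤ 2n`. Every edge lies in the union of two distinct blocks which is connected: the
blocks of its endpoints, or, if these coincide, that block together with a neighbouring one
(two consecutive blocks form one segment of the walk). By pigeonhole one of the `C(q + 1, 2)`
pairs carries at least `|E| / C(q + 1, 2)` edges; its union has at most `k` vertices and is
grown to a connected `k`-set. Since `σ*_k ≤ 2|E| / k` and `h² C(q + 1, 2) ≤ 3 n²`, the bound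
follows.
-/

namespace SimpleGraph

variable {G : SimpleGraph V}

lemma Connected.exists_adj_of_mem_of_notMem (hG : G.Connected) {s : Set V} {u v : V}
    (hu : u ∈ s) (hv : v ∉ s) : ∃ x ∈ s, ∃ y ∉ s, G.Adj x y := by
  obtain ⟨d, -, hd, hd'⟩ := (hG.preconnected u v).some.exists_boundary_dart s hu hv
  exact ⟨d.fst, hd, d.snd, hd', d.adj⟩

lemma connected_induce_singleton (v : V) : (G.induce {v}).Connected := by
  rw [induce_singleton_eq_top]
  exact connected_top

lemma Connected.induce_insert {s : Set V} (hs : (G.induce s).Connected) {x y : V}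
    (hx : x ∈ s) (hxy : G.Adj x y) : (G.induce (insert y s)).Connected := by
  rw [Set.insert_eq]
  exact connected_induce_union (connected_induce_singleton y).preconnected hs.preconnected
    rfl hx hxy.symm

lemma Connected.exists_connected_induce_superset [Fintype V] (hG : G.Connected) {s : Finset V}
    (hs : (G.induce (s : Set V)).Connected) {k : ℕ} (hsk : #s ≤ k) (hk : k ≤ Fintype.card V) :
    ∃ t : Finset V, s ⊆ t ∧ #t = k ∧ (G.induce (t : Set V)).Connected := by
  classical
  induction k, hsk using Nat.le_induction with
  | base => exact ⟨s, subset_rfl, rfl, hs⟩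
  | succ k hsk ih =>
    obtain ⟨t, hst, rfl, ht⟩ := ih (by omega)
    obtain ⟨⟨u, hu⟩⟩ := ht.nonempty
    obtain ⟨v, hv⟩ : ∃ v, v ∉ t := by
      by_contra! h
      simp [eq_univ_of_forall h] at hk
    obtain ⟨x, hx, y, hy, hxy⟩ := hG.exists_adj_of_mem_of_notMem (s := (t : Set V)) hu hv
    refine ⟨insert y t, hst.trans (subset_insert _ _), card_insert_of_notMem hy, ?_⟩
    rw [coe_insert]
    exact ht.induce_insert hx hxy

lemma Walk.exists_length_eq_add_two [DecidableEq V] {u u' w v : V} (p : G.Walk u u')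
    (hw : w ∈ p.support) (hwv : G.Adj w v) :
    ∃ q : G.Walk u u', q.length = p.length + 2 ∧
      insert v p.support.toFinset ⊆ q.support.toFinset := by
  refine ⟨(p.takeUntil w hw).append (cons hwv (cons hwv.symm (p.dropUntil w hw))), ?_, ?_⟩
  · conv_rhs => rw [← p.take_spec hw]
    simp only [length_append, length_cons]
    omega
  · intro x hx
    rw [mem_insert, List.mem_toFinset] at hx
    rw [List.mem_toFinset, mem_support_append_iff, support_cons, support_cons]
    rcases hx with rfl | hx
    · simp
    · rw [← p.take_spec hw, mem_support_append_iff] at hx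
      rcases hx with hx | hx
      · exact .inl hx
      · exact .inr (List.mem_cons_of_mem _ (List.mem_cons_of_mem _ hx))

lemma Connected.exists_walk_length_le_card_support [Fintype V] [DecidableEq V]
    (hG : G.Connected) (z : V) {k : ℕ} (hk : k < Fintype.card V) :
    ∃ p : G.Walk z z, p.length ≤ 2 * k ∧ k + 1 ≤ #p.support.toFinset := by
  induction k with
  | zero => exact ⟨Walk.nil, by simp, by simp⟩
  | succ k ih =>
    obtain ⟨p, hlen, hcard⟩ := ih (by omega)
    by_cases hbig : k + 2 ≤ #p.support.toFinset
    · exact ⟨p, by omega, hbig⟩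
    obtain ⟨v, hv⟩ : ∃ v, v ∉ p.support.toFinset := by
      by_contra! h
      simp [eq_univ_of_forall h] at hbig
      omega
    obtain ⟨w, hw, y, hy, hwy⟩ := hG.exists_adj_of_mem_of_notMem
      (s := (p.support.toFinset : Set V)) (u := z) (by simp) hv
    obtain ⟨q, hqlen, hq⟩ := p.exists_length_eq_add_two (by simpa using hw) hwy
    refine ⟨q, by omega, ?_⟩
    have := card_le_card hq
    rw [card_insert_of_notMem hy] at this
    omega

lemma Connected.exists_walk_length_le_forall_mem_support [Fintype V] (hG : G.Connected) (z : V) :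
    ∃ p : G.Walk z z, p.length ≤ 2 * (Fintype.card V - 1) ∧ ∀ v, v ∈ p.support := by
  classical
  have hpos : 0 < Fintype.card V := Fintype.card_pos_iff.2 ⟨z⟩
  obtain ⟨p, hlen, hcard⟩ := hG.exists_walk_length_le_card_support z (k := Fintype.card V - 1)
    (by omega)
  have huniv := eq_univ_of_card p.support.toFinset
    (le_antisymm (card_le_univ _) (by omega))
  exact ⟨p, hlen, fun v => List.mem_toFinset.1 (huniv ▸ mem_univ v)⟩

lemma connected_induce_image_Ico [DecidableEq V] {f : ℕ → V}
    (hf : ∀ i, f (i + 1) = f i ∨ G.Adj (f i) (f (i + 1))) {a b : ℕ} (hab : a < b) :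
    (G.induce ((Ico a b).image f : Set V)).Connected := by
  induction b, hab using Nat.le_induction with
  | base =>
    rw [Nat.Ico_succ_singleton, image_singleton, coe_singleton]
    exact connected_induce_singleton _
  | succ b hab ih =>
    obtain ⟨c, rfl⟩ : ∃ c, b = c + 1 := ⟨b - 1, by omega⟩
    have hc : f c ∈ (Ico a (c + 1)).image f := mem_image_of_mem f (by simp; omega)
    rw [Nat.Ico_succ_right_eq_insert_Ico (by omega), image_insert, coe_insert]
    rcases hf c with h | h
    · rwa [h, Set.insert_eq_of_mem hc]
    · exact ih.induce_insert hc h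

lemma Walk.getVert_succ_eq_or_adj {u v : V} (p : G.Walk u v) (i : ℕ) :
    p.getVert (i + 1) = p.getVert i ∨ G.Adj (p.getVert i) (p.getVert (i + 1)) := by
  rcases lt_or_ge i p.length with h | h
  · exact .inr (p.adj_getVert_succ h)
  · exact .inl (by rw [p.getVert_of_length_le h, p.getVert_of_length_le (by omega)])

lemma Connected.exists_tour [Fintype V] (hG : G.Connected) :
    ∃ f : ℕ → V, (∀ i, f (i + 1) = f i ∨ G.Adj (f i) (f (i + 1))) ∧
      ∀ v, ∃ j ≤ 2 * (Fintype.card V - 1), f j = v := by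
  obtain ⟨z⟩ := hG.nonempty
  obtain ⟨p, hlen, hp⟩ := hG.exists_walk_length_le_forall_mem_support z
  refine ⟨p.getVert, p.getVert_succ_eq_or_adj, fun v => ?_⟩
  obtain ⟨j, hj, hjl⟩ := Walk.mem_support_iff_exists_getVert.1 (hp v)
  exact ⟨j, hjl.trans hlen, hj⟩

section EdgeCount

variable [Fintype V] [DecidableEq V] [DecidableRel G.Adj]

lemma ncard_edgeSet_induce (s : Finset V) :
    (G.induce (s : Set V)).edgeSet.ncard = #(G.edgeFinset ∩ s.sym2) := by
  rw [← filter_edgeFinset_toFinset_subset, card_filter_edgeFinset_toFinset_subset,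
    Set.ncard_eq_toFinset_card']
  rfl

lemma exists_card_edgeFinset_le_mul {ι : Type*} {T : Finset ι} (hT : T.Nonempty)
    (S : ι → Finset V) (hcover : ∀ e ∈ G.edgeFinset, ∃ t ∈ T, e ∈ (S t).sym2) :
    ∃ t ∈ T, #G.edgeFinset ≤ #T * #(G.edgeFinset ∩ (S t).sym2) := by
  obtain ⟨t, ht, hmax⟩ := T.exists_max_image (fun t => #(G.edgeFinset ∩ (S t).sym2)) hT
  refine ⟨t, ht, ?_⟩
  calc #G.edgeFinset ≤ #(T.biUnion fun t => G.edgeFinset ∩ (S t).sym2) := by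
        refine card_le_card fun e he => ?_
        obtain ⟨t, ht, het⟩ := hcover e he
        exact mem_biUnion.2 ⟨t, ht, mem_inter.2 ⟨he, het⟩⟩
    _ ≤ ∑ t ∈ T, #(G.edgeFinset ∩ (S t).sym2) := card_biUnion_le
    _ ≤ #T * #(G.edgeFinset ∩ (S t).sym2) := by simpa using sum_le_card_nsmul T _ _ hmax

end EdgeCount

section Blocks

variable [DecidableEq V]

def block (f : ℕ → V) (h i : ℕ) : Finset V := (Ico (i * h) ((i + 1) * h)).image f

lemma card_block_le (f : ℕ → V) (h i : ℕ) : #(block f h i) ≤ h :=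
  card_image_le.trans (by simp [Nat.card_Ico, add_mul])

lemma mem_block_div (f : ℕ → V) {h : ℕ} (hh : 0 < h) (j : ℕ) : f j ∈ block f h (j / h) :=
  mem_image_of_mem f (mem_Ico.2 ⟨Nat.div_mul_le_self j h, by
    rw [add_mul, one_mul]; exact Nat.lt_div_mul_add hh⟩)

lemma connected_induce_block {f : ℕ → V}
    (hf : ∀ i, f (i + 1) = f i ∨ G.Adj (f i) (f (i + 1))) {h : ℕ} (hh : 0 < h) (i : ℕ) :
    (G.induce (block f h i : Set V)).Connected :=
  connected_induce_image_Ico hf (by nlinarith)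

lemma connected_induce_block_union_succ {f : ℕ → V}
    (hf : ∀ i, f (i + 1) = f i ∨ G.Adj (f i) (f (i + 1))) {h : ℕ} (hh : 0 < h) (i : ℕ) :
    (G.induce ((block f h i ∪ block f h (i + 1) : Finset V) : Set V)).Connected := by
  rw [block, block, ← image_union, Ico_union_Ico_eq_Ico (by nlinarith) (by nlinarith)]
  exact connected_induce_image_Ico hf (by nlinarith)

lemma exists_pair_connected_induce_biUnion_block {f : ℕ → V}
    (hf : ∀ i, f (i + 1) = f i ∨ G.Adj (f i) (f (i + 1))) {h L : ℕ} (hh : 0 < h)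
    (hhL : h ≤ L)
    (hsurj : ∀ v, ∃ j ≤ L, f j = v) {x y : V} (hxy : G.Adj x y) :
    ∃ P ∈ (range (L / h + 1)).powersetCard 2,
      (G.induce ((P.biUnion (block f h) : Finset V) : Set V)).Connected ∧
        s(x, y) ∈ (P.biUnion (block f h)).sym2 := by
  obtain ⟨jx, hjx, rfl⟩ := hsurj x
  obtain ⟨jy, hjy, rfl⟩ := hsurj y
  have hx := mem_block_div f hh jx
  have hy := mem_block_div f hh jy
  have hix : jx / h ≤ L / h := Nat.div_le_div_right hjx
  have hiy : jy / h ≤ L / h := Nat.div_le_div_right hjy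
  by_cases hij : jx / h = jy / h
  · have hq : 1 ≤ L / h := (Nat.le_div_iff_mul_le hh).2 (by omega)
    set i := min (jx / h) (L / h - 1)
    refine ⟨{i, i + 1}, mem_powersetCard.2 ⟨?_, card_pair (by omega)⟩, ?_, ?_⟩
    · intro a ha
      simp only [mem_insert, mem_singleton] at ha
      rw [mem_range]
      omega
    · rw [biUnion_insert, singleton_biUnion]
      exact connected_induce_block_union_succ hf hh i
    · rw [biUnion_insert, singleton_biUnion, mk_mem_sym2_iff]
      rw [← hij] at hy
      rcases (by omega : jx / h = i ∨ jx / h = i + 1) with hi | hi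
      · exact ⟨mem_union_left _ (hi ▸ hx), mem_union_left _ (hi ▸ hy)⟩
      · exact ⟨mem_union_right _ (hi ▸ hx), mem_union_right _ (hi ▸ hy)⟩
  · refine ⟨{jx / h, jy / h}, mem_powersetCard.2 ⟨?_, card_pair hij⟩, ?_, ?_⟩
    · intro a ha
      simp only [mem_insert, mem_singleton] at ha
      rw [mem_range]
      omega
    · rw [biUnion_insert, singleton_biUnion, coe_union]
      exact connected_induce_union (connected_induce_block hf hh _).preconnected
        (connected_induce_block hf hh _).preconnected hx hy hxy
    · rw [biUnion_insert, singleton_biUnion, mk_mem_sym2_iff]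
      exact ⟨mem_union_left _ hx, mem_union_right _ hy⟩

end Blocks

lemma sq_mul_choose_two_le {h n : ℕ} (hn : 2 * h ≤ n) :
    h ^ 2 * ((2 * (n - 1) / h + 1).choose 2) ≤ 3 * n ^ 2 := by
  set q := 2 * (n - 1) / h
  have hq : q * h ≤ 2 * n := (Nat.div_mul_le_self _ _).trans (by omega)
  have hc : (q + 1).choose 2 * 2 ≤ (q + 1) * q := by
    rw [Nat.choose_two_right, Nat.add_sub_cancel]
    exact Nat.div_mul_le_self _ _
  have key : (q * h) * (2 * (q * h + h)) ≤ (2 * n) * (5 * n) := Nat.mul_le_mul hq (by omega)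
  nlinarith

theorem Connected.exists_connected_induce_card_eq_two_mul [Fintype V] (hG : G.Connected) {h : ℕ}
    (hh : 0 < h) (hn : 2 * h ≤ Fintype.card V) :
    ∃ S : Finset V, #S = 2 * h ∧ (G.induce (S : Set V)).Connected ∧
      h ^ 2 * G.edgeSet.ncard ≤
        3 * Fintype.card V ^ 2 * (G.induce (S : Set V)).edgeSet.ncard := by
  classical
  set n := Fintype.card V
  have : Nontrivial V := Fintype.one_lt_card_iff_nontrivial.1 (by omega)
  obtain ⟨f, hf, hsurj⟩ := hG.exists_tour
  set B := block f h
  set T := ((range (2 * (n - 1) / h + 1)).powersetCard 2).filter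
    fun P => (G.induce ((P.biUnion B : Finset V) : Set V)).Connected
  have hcover : ∀ e ∈ G.edgeFinset, ∃ P ∈ T, e ∈ (P.biUnion B).sym2 := by
    intro e he
    induction e using Sym2.ind with
    | _ x y =>
      obtain ⟨P, hP, hconn, hmem⟩ := exists_pair_connected_induce_biUnion_block
        hf hh (by omega) hsurj (mem_edgeFinset.1 he)
      exact ⟨P, mem_filter.2 ⟨hP, hconn⟩, hmem⟩
  obtain ⟨x, y, hxy⟩ : ∃ x y, G.Adj x y :=
    ⟨_, hG.preconnected.exists_adj_of_nontrivial (Classical.arbitrary V)⟩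
  obtain ⟨P₀, hP₀, -⟩ := hcover s(x, y) (mem_edgeFinset.2 hxy)
  obtain ⟨P, hPT, hP⟩ := exists_card_edgeFinset_le_mul ⟨P₀, hP₀⟩ _ hcover
  obtain ⟨hPpair, hPconn⟩ := mem_filter.1 hPT
  have hPcard : #(P.biUnion B) ≤ 2 * h := by
    have := card_biUnion_le_card_mul P B h fun i _ => card_block_le _ _ _
    rwa [(mem_powersetCard.1 hPpair).2] at this
  obtain ⟨S, hPS, hS, hSconn⟩ := hG.exists_connected_induce_superset hPconn hPcard hn
  refine ⟨S, hS, hSconn, ?_⟩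
  have hT : #T ≤ (2 * (n - 1) / h + 1).choose 2 :=
    (card_filter_le _ _).trans (by rw [card_powersetCard, card_range])
  rw [ncard_edgeSet_induce, ← coe_edgeFinset, Set.ncard_coe_finset]
  calc h ^ 2 * #G.edgeFinset
      ≤ h ^ 2 * (2 * (n - 1) / h + 1).choose 2 * #(G.edgeFinset ∩ (P.biUnion B).sym2) := by
        rw [mul_assoc]; gcongr; exact hP.trans (by gcongr)
    _ ≤ 3 * n ^ 2 * #(G.edgeFinset ∩ S.sym2) := by
        exact Nat.mul_le_mul (sq_mul_choose_two_le hn)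
          (card_le_card (inter_subset_inter subset_rfl (sym2_mono hPS)))

end SimpleGraph

lemma maxKDensity_le [Finite V] (G : SimpleGraph V) (k : ℕ) :
    maxKDensity G k ≤ 2 * G.edgeSet.ncard / k := by
  refine Real.sSup_le ?_ (by positivity)
  rintro _ ⟨H, hH, rfl⟩
  rw [subDensity, hH]
  gcongr
  · exact Set.toFinite _
  · exact H.edgeSet_subset

/-- every connected graph has a connected `k`-subgraph whose density is
at least `k²/(12n²)` times `σ*_k(G)`. -/
theorem stmt8 [Fintype V] (G : SimpleGraph V) (hG : G.Connected) (k : ℕ)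
    (hke : Even k) (hk4 : 4 ≤ k) (hkn : k ≤ Fintype.card V) :
    ∃ S : Finset V, S.card = k ∧ (G.induce (S : Set V)).Connected ∧
      maxKDensity G k ≤ (12 * (Fintype.card V : ℝ) ^ 2 / (k : ℝ) ^ 2) * indDensity G S := by
  obtain ⟨h, rfl⟩ := hke.two_dvd
  obtain ⟨S, hS, hconn, hedges⟩ :=
    hG.exists_connected_induce_card_eq_two_mul (h := h) (by omega) hkn
  refine ⟨S, hS, hconn, (maxKDensity_le G _).trans ?_⟩
  have hh : (0 : ℝ) < h := by exact_mod_cast (by omega : 0 < h)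
  have hedges' : (h : ℝ) ^ 2 * G.edgeSet.ncard ≤
      3 * (Fintype.card V : ℝ) ^ 2 * (G.induce (S : Set V)).edgeSet.ncard := by
    exact_mod_cast hedges
  rw [indDensity, hS]
  push_cast
  rw [div_le_iff₀ (by positivity)]
  field_simp
  linear_combination 4 * hedges'
end

section
/- For every integer ℓ ≥ 2 there exists a connected finite simple graph G on n = ℓ³ vertices such that, with k = ℓ², the maximum density of a k-vertex subgraph of G is at least (ℓ/3) = (n^{1/3}/3) times the maximum density over all connected k-vertex subgraphs of G. (Concretely, G is formed from ℓ vertex-disjoint ℓ-cliques L₁,…,L_ℓ by joining L_i to L_{i+1} with a path of length ℓ²+1 for each i; its densest k-subgraph is the disjoint union of the cliques, with density ℓ−1, whereas every connected k-subgraph has density at most 3(ℓ−1)/ℓ.) -/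
open Finset

variable {V : Type*}

/-!
In `cliqueChain ℓ` the vertices `0, …, ℓ³ - 1` form a path, and in every block of `ℓ² + ℓ`
consecutive vertices the first `ℓ` also form a clique: `ℓ` copies of `K_ℓ` are joined in a row
by paths with `ℓ²` inner vertices. The union of the cliques has `ℓ²` vertices and density `ℓ - 1`.

A connected subgraph on `ℓ²` vertices cannot meet two cliques, since it would contain the `ℓ²`
inner vertices of a path between them. If it meets one clique in `1 ≤ t ≤ ℓ` vertices, it has at
most `t(t - 1)/2` edges inside that clique, and every other edge is a path edge which can be
charged to its endpoint farther from the clique; this endpoint lies outside the clique, so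
`2|E| ≤ t(t - 1) + 2(ℓ² - t) ≤ 3ℓ(ℓ - 1)`. If it meets no clique, its edges are path edges and
there are at most `ℓ² - 1` of them. Either way its density is at most `3(ℓ - 1)/ℓ`.
-/

open SimpleGraph

/-- An edge `x ⋖ y` is charged to `x` if `y ∉ U` and to `y` if `y ∈ U`; as `U` is an upper set,
no vertex is charged twice. -/
theorem Finset.card_le_card_of_covBy_edges {α : Type*} [LinearOrder α] {U : Set α}
    (hU : IsUpperSet U) {E : Finset (Sym2 α)} {T : Finset α}
    (h : ∀ e ∈ E, ∃ x y, x ⋖ y ∧ e = s(x, y) ∧ (y ∉ U ∧ x ∈ T ∨ y ∈ U ∧ y ∈ T)) :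
    #E ≤ #T := by
  refine card_le_card_of_forall_subsingleton
    (fun e v => ∃ w, (v ⋖ w ∧ w ∉ U ∧ e = s(v, w)) ∨ (w ⋖ v ∧ v ∈ U ∧ e = s(w, v))) ?_ ?_
  · intro e he
    obtain ⟨x, y, hxy, rfl, ⟨hy, hx⟩ | ⟨hy, hyT⟩⟩ := h e he
    · exact ⟨x, hx, y, .inl ⟨hxy, hy, rfl⟩⟩
    · exact ⟨y, hyT, x, .inr ⟨hxy, hy, rfl⟩⟩
  · rintro v - e₁ ⟨-, w₁, h₁⟩ e₂ ⟨-, w₂, h₂⟩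
    rcases h₁ with ⟨hv₁, hw₁, rfl⟩ | ⟨hv₁, hv, rfl⟩ <;>
      rcases h₂ with ⟨hv₂, hw₂, rfl⟩ | ⟨hv₂, hv', rfl⟩
    · rw [hv₁.unique_right hv₂]
    · exact absurd (hU hv₁.le hv') hw₁
    · exact absurd (hU hv₂.le hv) hw₂
    · rw [hv₁.unique_left hv₂]

theorem Finset.card_le_choose_two_of_forall_mem {α : Type*} [DecidableEq α]
    {E : Finset (Sym2 α)} {D : Finset α} (h : ∀ e ∈ E, ¬e.IsDiag ∧ ∀ v ∈ e, v ∈ D) :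
    #E ≤ (#D).choose 2 := by
  rw [← Sym2.card_image_offDiag]
  refine card_le_card fun e he => ?_
  induction e using Sym2.ind with
  | _ x y =>
    obtain ⟨hxy, hD⟩ := h _ he
    exact mem_image.2 ⟨(x, y), mem_offDiag.2 ⟨hD x (Sym2.mem_mk_left x y),
      hD y (Sym2.mem_mk_right x y), by simpa using hxy⟩, rfl⟩

theorem SimpleGraph.Subgraph.Connected.mem_verts_of_le_of_le {V : Type*} [LinearOrder V]
    {G : SimpleGraph V} {H : G.Subgraph} (hH : H.Connected) {m : V}
    (hm : ∀ x y, G.Adj x y → x < m → y ≤ m) {u v : V} (hu : u ∈ H.verts) (hv : v ∈ H.verts)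
    (hum : u ≤ m) (hmv : m ≤ v) : m ∈ H.verts := by
  by_contra hmH
  obtain ⟨p⟩ := hH.preconnected ⟨u, hu⟩ ⟨v, hv⟩
  obtain ⟨d, -, hd₁, hd₂⟩ := p.exists_boundary_dart {x | x.1 < m}
    (hum.lt_of_ne fun h => hmH (h ▸ hu)) (not_lt.2 hmv)
  have hle : d.snd.1 ≤ m := hm _ _ (H.adj_sub d.adj) hd₁
  exact hmH (le_antisymm hle (not_lt.1 hd₂) ▸ d.snd.2)

theorem le_maxKDensity {V : Type*} [Finite V] {G : SimpleGraph V} (H : G.Subgraph) :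
    subDensity H ≤ maxKDensity G H.verts.ncard :=
  le_csSup ((Set.finite_range subDensity).subset
    (by rintro _ ⟨H, -, rfl⟩; exact ⟨H, rfl⟩)).bddAbove ⟨H, rfl, rfl⟩

theorem maxConnKDensity_le {V : Type*} {G : SimpleGraph V} {k : ℕ} {r : ℝ} (hr : 0 ≤ r)
    (h : ∀ H : G.Subgraph, H.verts.ncard = k → H.Connected → subDensity H ≤ r) :
    maxConnKDensity G k ≤ r :=
  Real.sSup_le (by rintro _ ⟨H, hk, hc, rfl⟩; exact h H hk hc) hr

section CliqueChain

variable {ℓ : ℕ}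

/-- Vertex `v` has offset `v % blockLen ℓ` in block `v / blockLen ℓ`. Offsets `< ℓ` form the
block's clique, the other `ℓ²` offsets are the inner vertices of the path to the next clique; of
the last block only the clique fits into `Fin (ℓ ^ 3)`. -/
def blockLen (ℓ : ℕ) : ℕ := ℓ ^ 2 + ℓ

def blockCliques (ℓ : ℕ) : SimpleGraph (Fin (ℓ ^ 3)) where
  Adj u v := u ≠ v ∧ u.val / blockLen ℓ = v.val / blockLen ℓ ∧
    u.val % blockLen ℓ < ℓ ∧ v.val % blockLen ℓ < ℓ
  symm := ⟨fun _ _ ⟨hne, hdiv, hu, hv⟩ => ⟨hne.symm, hdiv.symm, hv, hu⟩⟩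
  loopless := ⟨fun _ h => h.1 rfl⟩

theorem blockCliques_adj {u v : Fin (ℓ ^ 3)} :
    (blockCliques ℓ).Adj u v ↔ u ≠ v ∧ u.val / blockLen ℓ = v.val / blockLen ℓ ∧
      u.val % blockLen ℓ < ℓ ∧ v.val % blockLen ℓ < ℓ :=
  Iff.rfl

instance : DecidableRel (blockCliques ℓ).Adj :=
  fun u v => inferInstanceAs (Decidable (u ≠ v ∧ _))

def cliqueChain (ℓ : ℕ) : SimpleGraph (Fin (ℓ ^ 3)) := pathGraph (ℓ ^ 3) ⊔ blockCliques ℓ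

theorem cliqueChain_adj {u v : Fin (ℓ ^ 3)} :
    (cliqueChain ℓ).Adj u v ↔ u ⋖ v ∨ v ⋖ u ∨ (blockCliques ℓ).Adj u v := by
  rw [cliqueChain, sup_adj, pathGraph, hasse_adj, or_assoc]

theorem cliqueChain_connected (hℓ : 1 ≤ ℓ) : (cliqueChain ℓ).Connected :=
  ((connected_iff _).2 ⟨pathGraph_preconnected _, ⟨⟨0, by positivity⟩⟩⟩).mono le_sup_left

theorem blockLen_mul_add_div_mod {c r : ℕ} (hr : r < blockLen ℓ) :
    (blockLen ℓ * c + r) / blockLen ℓ = c ∧ (blockLen ℓ * c + r) % blockLen ℓ = r := by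
  have hpos : 0 < blockLen ℓ := by omega
  refine ⟨?_, ?_⟩
  · rw [Nat.mul_add_div hpos, Nat.div_eq_of_lt hr, add_zero]
  · rw [Nat.mul_add_mod, Nat.mod_eq_of_lt hr]

theorem blockLen_mul_add_le {c : ℕ} (hc : c < ℓ) : blockLen ℓ * c + ℓ ≤ ℓ ^ 3 := by
  have : blockLen ℓ * c ≤ blockLen ℓ * (ℓ - 1) := Nat.mul_le_mul_left _ (by omega)
  have : blockLen ℓ * (ℓ - 1) + ℓ = ℓ ^ 3 := by
    obtain ⟨m, rfl⟩ : ∃ m, ℓ = m + 1 := ⟨ℓ - 1, by omega⟩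
    simp only [blockLen, Nat.add_sub_cancel]; ring
  omega

theorem div_blockLen_lt (v : Fin (ℓ ^ 3)) : v.val / blockLen ℓ < ℓ := by
  have hℓ : 0 < ℓ := Nat.pos_of_ne_zero (by rintro rfl; exact v.elim0)
  rw [Nat.div_lt_iff_lt_mul (by unfold blockLen; positivity)]
  calc v.val < ℓ ^ 3 := v.isLt
    _ ≤ ℓ * blockLen ℓ := by unfold blockLen; ring_nf; omega

theorem card_filter_mod_lt_div_eq {c : ℕ} (hc : c < ℓ) :
    #{v : Fin (ℓ ^ 3) | v.val % blockLen ℓ < ℓ ∧ v.val / blockLen ℓ = c} = ℓ := by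
  have hℓb : ℓ ≤ blockLen ℓ := Nat.le_add_left ℓ (ℓ ^ 2)
  have hmax := blockLen_mul_add_le hc
  suffices h : Finset.map Fin.valEmbedding
      {v : Fin (ℓ ^ 3) | v.val % blockLen ℓ < ℓ ∧ v.val / blockLen ℓ = c} =
      Finset.Ico (blockLen ℓ * c) (blockLen ℓ * c + ℓ) by
    rw [← Finset.card_map, h, Nat.card_Ico, Nat.add_sub_cancel_left]
  ext m
  simp only [Finset.mem_map, Finset.mem_filter, Finset.mem_univ, true_and, Finset.mem_Ico,
    Fin.valEmbedding_apply]
  constructor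
  · rintro ⟨v, ⟨hv, rfl⟩, rfl⟩
    have := Nat.div_add_mod v.val (blockLen ℓ)
    omega
  · rintro ⟨h₁, h₂⟩
    obtain ⟨hdiv, hmod⟩ := blockLen_mul_add_div_mod (ℓ := ℓ) (c := c)
      (r := m - blockLen ℓ * c) (by omega)
    rw [Nat.add_sub_cancel' h₁] at hdiv hmod
    exact ⟨⟨m, by omega⟩, ⟨by simp only; omega, hdiv⟩, rfl⟩

theorem card_filter_mod_lt (ℓ : ℕ) :
    #{v : Fin (ℓ ^ 3) | v.val % blockLen ℓ < ℓ} = ℓ ^ 2 := by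
  rw [Finset.card_eq_sum_card_fiberwise (f := fun v => v.val / blockLen ℓ) (t := Finset.range ℓ)
    fun v _ => Finset.mem_range.2 (div_blockLen_lt v)]
  simp only [Finset.filter_filter]
  rw [Finset.sum_congr rfl fun c hc => card_filter_mod_lt_div_eq (Finset.mem_range.1 hc),
    Finset.sum_const, Finset.card_range, smul_eq_mul, sq]

theorem degree_blockCliques (v : Fin (ℓ ^ 3)) :
    (blockCliques ℓ).degree v = if v.val % blockLen ℓ < ℓ then ℓ - 1 else 0 := by
  split_ifs with hv
  · have h : (blockCliques ℓ).neighborFinset v = Finset.erase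
        {u : Fin (ℓ ^ 3) | u.val % blockLen ℓ < ℓ ∧ u.val / blockLen ℓ = v.val / blockLen ℓ} v :=
        by
      ext u
      simp only [mem_neighborFinset, blockCliques_adj, Finset.mem_erase, Finset.mem_filter,
        Finset.mem_univ, true_and]
      constructor
      · rintro ⟨hne, hdiv, -, hu⟩; exact ⟨hne.symm, hu, hdiv.symm⟩
      · rintro ⟨hne, hu, hdiv⟩; exact ⟨hne.symm, hdiv.symm, hv, hu⟩
    rw [← card_neighborFinset_eq_degree, h, Finset.card_erase_of_mem (by simpa using hv),
      card_filter_mod_lt_div_eq (div_blockLen_lt v)]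
  · rw [← card_neighborFinset_eq_degree, Finset.card_eq_zero, Finset.eq_empty_iff_forall_notMem]
    exact fun u hu => hv ((mem_neighborFinset _ _ _).1 hu).2.2.1

theorem two_mul_card_edgeFinset_blockCliques (ℓ : ℕ) :
    2 * #(blockCliques ℓ).edgeFinset = ℓ ^ 2 * (ℓ - 1) := by
  rw [← sum_degrees_eq_twice_card_edges]
  simp only [degree_blockCliques]
  rw [Finset.sum_ite, Finset.sum_const_zero, add_zero, Finset.sum_const, smul_eq_mul,
    card_filter_mod_lt ℓ]

def blockCliquesSubgraph (ℓ : ℕ) : (cliqueChain ℓ).Subgraph where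
  verts := {v | v.val % blockLen ℓ < ℓ}
  Adj := (blockCliques ℓ).Adj
  adj_sub h := Or.inr h
  edge_vert h := h.2.2.1
  symm := (blockCliques ℓ).symm

theorem ncard_verts_blockCliquesSubgraph (ℓ : ℕ) :
    (blockCliquesSubgraph ℓ).verts.ncard = ℓ ^ 2 := by
  rw [← card_filter_mod_lt ℓ, ← Set.ncard_coe_finset]
  congr 1
  ext v
  simp [blockCliquesSubgraph]

theorem subDensity_blockCliquesSubgraph (hℓ : 1 ≤ ℓ) :
    subDensity (blockCliquesSubgraph ℓ) = ℓ - 1 := by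
  have hedges : (blockCliquesSubgraph ℓ).edgeSet = (blockCliques ℓ).edgeSet := rfl
  have h := two_mul_card_edgeFinset_blockCliques ℓ
  rw [← Set.ncard_coe_finset, coe_edgeFinset, ← hedges] at h
  rw [subDensity, ncard_verts_blockCliquesSubgraph ℓ, ← Nat.cast_ofNat, ← Nat.cast_mul, h]
  push_cast [Nat.cast_sub hℓ]
  field_simp

theorem cliqueChain_adj_le_of_lt {m x y : Fin (ℓ ^ 3)} (hm : ℓ ≤ m.val % blockLen ℓ)
    (hxy : (cliqueChain ℓ).Adj x y) (hxm : x < m) : y ≤ m := by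
  rcases cliqueChain_adj.1 hxy with h | h | ⟨-, hdiv, -, hy⟩
  · exact h.ge_of_gt hxm
  · exact (h.lt.trans hxm).le
  · by_contra! hmy
    have h₁ := Nat.div_le_div_right (c := blockLen ℓ) (Fin.val_le_of_le hxm.le)
    have h₂ := Nat.div_le_div_right (c := blockLen ℓ) (Fin.val_le_of_le hmy.le)
    have h₃ := Nat.div_add_mod m.val (blockLen ℓ)
    have h₄ := Nat.div_add_mod y.val (blockLen ℓ)
    have : m.val / blockLen ℓ = y.val / blockLen ℓ := by omega
    rw [this] at h₃
    have : m.val < y.val := hmy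
    omega

theorem exists_mem_verts_of_div_lt {H : (cliqueChain ℓ).Subgraph} (hH : H.Connected)
    {u v : Fin (ℓ ^ 3)} (hu : u ∈ H.verts) (hv : v ∈ H.verts) (hu' : u.val % blockLen ℓ < ℓ)
    (huv : u.val / blockLen ℓ < v.val / blockLen ℓ) {m : ℕ}
    (hm : m ∈ Finset.Ico (blockLen ℓ * (u.val / blockLen ℓ) + ℓ)
      (blockLen ℓ * (u.val / blockLen ℓ) + blockLen ℓ)) :
    ∃ h : m < ℓ ^ 3, ⟨m, h⟩ ∈ H.verts := by
  rw [Finset.mem_Ico] at hm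
  have hu₀ := Nat.div_add_mod u.val (blockLen ℓ)
  have hv₀ := Nat.div_add_mod v.val (blockLen ℓ)
  have hv₁ := Nat.mul_le_mul_left (blockLen ℓ) huv
  rw [Nat.mul_succ] at hv₁
  have hmv : m < v.val := by omega
  refine ⟨hmv.trans v.isLt, hH.mem_verts_of_le_of_le (fun x y hxy hxm => ?_) hu hv ?_ hmv.le⟩
  · refine cliqueChain_adj_le_of_lt ?_ hxy hxm
    have := (blockLen_mul_add_div_mod (ℓ := ℓ) (c := u.val / blockLen ℓ)
      (r := m - blockLen ℓ * (u.val / blockLen ℓ)) (by omega)).2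
    simp only
    rw [Nat.add_sub_cancel' (by omega)] at this
    omega
  · show u.val ≤ m
    omega

theorem div_eq_of_connected {H : (cliqueChain ℓ).Subgraph} (hH : H.Connected)
    (hk : H.verts.ncard ≤ ℓ ^ 2) {u v : Fin (ℓ ^ 3)} (hu : u ∈ H.verts) (hv : v ∈ H.verts)
    (hu' : u.val % blockLen ℓ < ℓ) (hv' : v.val % blockLen ℓ < ℓ) :
    u.val / blockLen ℓ = v.val / blockLen ℓ := by
  classical
  wlog huv : u.val / blockLen ℓ < v.val / blockLen ℓ generalizing u v
  · rcases (not_lt.1 huv).lt_or_eq with h | h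
    · exact (this hv hu hv' hu' h).symm
    · exact h.symm
  exfalso
  have hu₀ := Nat.div_add_mod u.val (blockLen ℓ)
  have hv₀ := Nat.div_add_mod v.val (blockLen ℓ)
  have hv₁ := Nat.mul_le_mul_left (blockLen ℓ) huv
  rw [Nat.mul_succ] at hv₁
  have hℓb : ℓ ≤ blockLen ℓ := Nat.le_add_left ℓ (ℓ ^ 2)
  set c := u.val / blockLen ℓ
  have hsub : insert u.val (insert v.val
      (Finset.Ico (blockLen ℓ * c + ℓ) (blockLen ℓ * c + blockLen ℓ))) ⊆
      H.verts.toFinset.map Fin.valEmbedding := by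
    intro m hm
    simp only [Finset.mem_insert, Finset.mem_map, Set.mem_toFinset, Fin.valEmbedding_apply] at hm ⊢
    rcases hm with rfl | rfl | hm
    · exact ⟨u, hu, rfl⟩
    · exact ⟨v, hv, rfl⟩
    · obtain ⟨h, hm⟩ := exists_mem_verts_of_div_lt hH hu hv hu' huv hm
      exact ⟨_, hm, rfl⟩
  have := Finset.card_le_card hsub
  rw [Finset.card_map, ← Set.ncard_eq_toFinset_card', Finset.card_insert_of_notMem,
    Finset.card_insert_of_notMem, Nat.card_Ico] at this
  · simp only [blockLen] at this; omega
  all_goals simp only [Finset.mem_insert, Finset.mem_Ico]; omega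

theorem exists_covBy_or_of_mem_edgeSet {e : Sym2 (Fin (ℓ ^ 3))}
    (he : e ∈ (cliqueChain ℓ).edgeSet) :
    (∃ x y, x ⋖ y ∧ e = s(x, y)) ∨ ∀ v ∈ e, v.val % blockLen ℓ < ℓ := by
  induction e using Sym2.ind with
  | _ x y =>
    rcases cliqueChain_adj.1 he with h | h | ⟨-, -, hx, hy⟩
    · exact .inl ⟨x, y, h, rfl⟩
    · exact .inl ⟨y, x, h, Sym2.eq_swap⟩
    · exact .inr fun v hv => by rcases Sym2.mem_iff.1 hv with rfl | rfl <;> assumption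

theorem card_add_one_le_of_forall_le_mod {E : Finset (Sym2 (Fin (ℓ ^ 3)))}
    {S : Finset (Fin (ℓ ^ 3))} (hS : S.Nonempty)
    (hE : ∀ e ∈ E, e ∈ (cliqueChain ℓ).edgeSet ∧ ∀ v ∈ e, v ∈ S)
    (hpath : ∀ v ∈ S, ℓ ≤ v.val % blockLen ℓ) : #E + 1 ≤ #S := by
  rw [← Finset.card_erase_add_one (S.max'_mem hS), add_le_add_iff_right]
  refine Finset.card_le_card_of_covBy_edges isUpperSet_empty fun e he => ?_
  obtain ⟨heG, heS⟩ := hE e he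
  rcases exists_covBy_or_of_mem_edgeSet heG with ⟨x, y, hxy, rfl⟩ | hclique
  · refine ⟨x, y, hxy, rfl, .inl ⟨Set.notMem_empty y,
      Finset.mem_erase.2 ⟨?_, heS x (Sym2.mem_mk_left x y)⟩⟩⟩
    exact (hxy.lt.trans_le (S.le_max' y (heS y (Sym2.mem_mk_right x y)))).ne
  · exact absurd (hclique _ e.out_fst_mem) (not_lt.2 (hpath _ (heS _ e.out_fst_mem)))

theorem card_add_card_le_of_forall_div_eq {E : Finset (Sym2 (Fin (ℓ ^ 3)))}
    {S : Finset (Fin (ℓ ^ 3))} (hE : ∀ e ∈ E, e ∈ (cliqueChain ℓ).edgeSet ∧ ∀ v ∈ e, v ∈ S)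
    {c : ℕ} (hc : ∀ v ∈ S, v.val % blockLen ℓ < ℓ → v.val / blockLen ℓ = c) :
    #E + #{v ∈ S | v.val % blockLen ℓ < ℓ} ≤
      (#{v ∈ S | v.val % blockLen ℓ < ℓ}).choose 2 + #S := by
  classical
  set D := {v ∈ S | v.val % blockLen ℓ < ℓ}
  have hD : ∀ v, v ∈ D ↔ v ∈ S ∧ v.val % blockLen ℓ < ℓ := fun v => Finset.mem_filter
  rw [← Finset.card_filter_add_card_filter_not (s := E) (fun e => ∀ v ∈ e, v ∈ D),
    ← Finset.card_sdiff_add_card_eq_card (Finset.filter_subset _ S : D ⊆ S), ← add_assoc]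
  refine Nat.add_le_add_right (Nat.add_le_add ?_ ?_) _
  · exact Finset.card_le_choose_two_of_forall_mem fun e he => by
      rw [Finset.mem_filter] at he
      exact ⟨(cliqueChain ℓ).not_isDiag_of_mem_edgeSet (hE e he.1).1, he.2⟩
  · have hℓb : ℓ ≤ blockLen ℓ := Nat.le_add_left ℓ (ℓ ^ 2)
    -- `U` is everything beyond clique `c`: each edge is charged to its endpoint farther from it.
    refine Finset.card_le_card_of_covBy_edges (U := {v | blockLen ℓ * c + ℓ ≤ v.val})
      (fun _ _ hab ha => le_trans ha (Fin.val_le_of_le hab)) fun e he => ?_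
    obtain ⟨heE, hout⟩ := Finset.mem_filter.1 he
    obtain ⟨heG, heS⟩ := hE e heE
    rcases exists_covBy_or_of_mem_edgeSet heG with ⟨x, y, hxy, rfl⟩ | hclique
    · have hxS := heS x (Sym2.mem_mk_left x y)
      have hyS := heS y (Sym2.mem_mk_right x y)
      have hy : y.val = x.val + 1 := (Nat.covBy_iff_add_one_eq.1 (Fin.covBy_iff.1 hxy)).symm
      refine ⟨x, y, hxy, rfl, ?_⟩
      by_cases hyU : blockLen ℓ * c + ℓ ≤ y.val
      · refine .inr ⟨hyU, Finset.mem_sdiff.2 ⟨hyS, fun hyD => ?_⟩⟩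
        have := Nat.div_add_mod y.val (blockLen ℓ)
        rw [hc y hyS ((hD y).1 hyD).2] at this
        have := ((hD y).1 hyD).2
        omega
      · refine .inl ⟨hyU, Finset.mem_sdiff.2 ⟨hxS, fun hxD => hout fun v hv => ?_⟩⟩
        rcases Sym2.mem_iff.1 hv with rfl | rfl
        · exact hxD
        have hx₀ := Nat.div_add_mod x.val (blockLen ℓ)
        have hx₁ := ((hD x).1 hxD).2
        rw [hc x hxS hx₁] at hx₀
        have := (blockLen_mul_add_div_mod (ℓ := ℓ) (c := c) (r := x.val % blockLen ℓ + 1)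
          (by omega)).2
        rw [← add_assoc, hx₀, ← hy] at this
        exact (hD v).2 ⟨hyS, by omega⟩
    · exact absurd (fun v hv => (hD v).2 ⟨heS v hv, hclique v hv⟩) hout

theorem two_mul_ncard_edgeSet_add_le (hℓ : 2 ≤ ℓ) {H : (cliqueChain ℓ).Subgraph}
    (hH : H.Connected) (hk : H.verts.ncard = ℓ ^ 2) :
    2 * H.edgeSet.ncard + 3 * ℓ ≤ 3 * ℓ ^ 2 := by
  classical
  have hS : #H.verts.toFinset = ℓ ^ 2 := by rw [← Set.ncard_eq_toFinset_card', hk]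
  rw [Set.ncard_eq_toFinset_card']
  have hE : ∀ e ∈ H.edgeSet.toFinset,
      e ∈ (cliqueChain ℓ).edgeSet ∧ ∀ v ∈ e, v ∈ H.verts.toFinset :=
    fun e he => ⟨H.edgeSet_subset (Set.mem_toFinset.1 he),
      fun v hv => Set.mem_toFinset.2 (H.mem_verts_of_mem_edge (Set.mem_toFinset.1 he) hv)⟩
  by_cases hclique : ∃ u ∈ H.verts, u.val % blockLen ℓ < ℓ
  · obtain ⟨u, hu, hu'⟩ := hclique
    have hc : ∀ v ∈ H.verts.toFinset,
        v.val % blockLen ℓ < ℓ → v.val / blockLen ℓ = u.val / blockLen ℓ :=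
      fun v hv hv' => div_eq_of_connected hH hk.le (Set.mem_toFinset.1 hv) hu hv' hu'
    have hbound := card_add_card_le_of_forall_div_eq hE hc
    set t := #{v ∈ H.verts.toFinset | v.val % blockLen ℓ < ℓ}
    have ht₁ : 1 ≤ t := Finset.card_pos.2 ⟨u, by simpa using ⟨hu, hu'⟩⟩
    have htℓ : t ≤ ℓ := by
      rw [← card_filter_mod_lt_div_eq (div_blockLen_lt u)]
      refine Finset.card_le_card fun v hv => ?_
      simp only [Finset.mem_filter, Finset.mem_univ, true_and] at hv ⊢
      exact ⟨hv.2, hc v hv.1 hv.2⟩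
    have hchoose : 2 * t.choose 2 = t * (t - 1) := by
      rw [Nat.choose_two_right, Nat.mul_div_cancel' (Nat.even_mul_pred_self t).two_dvd]
    obtain ⟨s, hs⟩ : ∃ s, t = s + 1 := ⟨t - 1, by omega⟩
    rw [hs, Nat.add_sub_cancel] at hchoose
    rw [hs] at hbound htℓ
    nlinarith
  · push Not at hclique
    have := card_add_one_le_of_forall_le_mod (Finset.card_pos.1 (by rw [hS]; positivity)) hE
      fun v hv => hclique v (Set.mem_toFinset.1 hv)
    nlinarith

theorem subDensity_le_of_connected (hℓ : 2 ≤ ℓ) {H : (cliqueChain ℓ).Subgraph}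
    (hH : H.Connected) (hk : H.verts.ncard = ℓ ^ 2) :
    subDensity H ≤ 3 * (ℓ - 1) / ℓ := by
  have h : (2 * H.edgeSet.ncard + 3 * ℓ : ℝ) ≤ 3 * ℓ ^ 2 := by
    exact_mod_cast two_mul_ncard_edgeSet_add_le hℓ hH hk
  have hℓ' : (0 : ℝ) < ℓ := by positivity
  rw [subDensity, hk, div_le_div_iff₀ (by positivity) hℓ']
  push_cast
  nlinarith

end CliqueChain

/-- for every `ℓ ≥ 2` there is a connected graph on `n = ℓ³` vertices
whose densest `ℓ²`-subgraph is at least `ℓ/3 = n^{1/3}/3` times denser than every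
connected `ℓ²`-subgraph. -/
theorem stmt14 (ℓ : ℕ) (hℓ : 2 ≤ ℓ) :
    ∃ G : SimpleGraph (Fin (ℓ ^ 3)), G.Connected ∧
      maxKDensity G (ℓ ^ 2) ≥ ((ℓ : ℝ) / 3) * maxConnKDensity G (ℓ ^ 2) := by
  refine ⟨cliqueChain ℓ, cliqueChain_connected (by omega), ?_⟩
  have hℓ' : (2 : ℝ) ≤ ℓ := by exact_mod_cast hℓ
  calc (ℓ : ℝ) / 3 * maxConnKDensity (cliqueChain ℓ) (ℓ ^ 2)
      ≤ ℓ / 3 * (3 * (ℓ - 1) / ℓ) := by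
        gcongr
        exact maxConnKDensity_le (div_nonneg (by linarith) (by linarith))
          fun H hk hH => subDensity_le_of_connected hℓ hH hk
    _ = subDensity (blockCliquesSubgraph ℓ) := by
        rw [subDensity_blockCliquesSubgraph (by omega)]
        field_simp
    _ ≤ maxKDensity (cliqueChain ℓ) (ℓ ^ 2) :=
        ncard_verts_blockCliquesSubgraph ℓ ▸ le_maxKDensity _
end

section
/- Let G be a connected finite simple graph on n vertices with nonnegative edge weights w, and let k be an integer with 2 ≤ k ≤ n. Then there exists a set S of exactly k vertices of G such that G[S] is connected and σ_w(G[S]) ≥ (2/k)·σ*_{k,w}(G), where σ*_{k,w}(G) is the maximum weighted density over all k-vertex subgraphs of G (not necessarily connected). -/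
open Finset

variable {V : Type*}

/-!
Let `S` be a `k`-set of maximum induced weight `W`; every `k`-vertex subgraph has weight at most
`W`, so `σ*_{k,w}(G) ≤ 2W/k`. Summing the weights of incident edges over the vertices of `S` counts
every edge twice, so some `v ∈ S` has incident weight at least `2W/k` inside `S`. The closed
neighbourhood of `v` in `S` is connected, has at most `k` vertices and weight at least `2W/k`; since
`G` is connected it can be grown one adjacent vertex at a time to a connected `k`-set `T`, whose
density `2 w(T)/k` is then at least `(2/k)(2W/k) ≥ (2/k) σ*_{k,w}(G)`.
-/

namespace SimpleGraph

section InducedWeight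

variable (G : SimpleGraph V) [DecidableRel G.Adj] (w : Sym2 V → ℝ)

def inducedEdges (S : Finset V) : Finset (Sym2 V) :=
  {e ∈ S.sym2 | e ∈ G.edgeSet}

noncomputable def inducedWeight (S : Finset V) : ℝ :=
  ∑ e ∈ G.inducedEdges S, w e

def closedNbhdWithin [DecidableEq V] (S : Finset V) (v : V) : Finset V :=
  insert v {u ∈ S | G.Adj v u}

variable {G w}

lemma mem_inducedEdges {S : Finset V} {e : Sym2 V} :
    e ∈ G.inducedEdges S ↔ e ∈ G.edgeSet ∧ ∀ v ∈ e, v ∈ S := by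
  rw [inducedEdges, mem_filter, mem_sym2_iff, and_comm]

lemma indWDensity_eq_inducedWeight (S : Finset V) :
    indWDensity G w S = 2 * G.inducedWeight w S / S.card := by
  have hE : {e : Sym2 V | e ∈ G.edgeSet ∧ ∀ v ∈ e, v ∈ S} = (G.inducedEdges S : Set (Sym2 V)) :=
    Set.ext fun _ => mem_inducedEdges.symm
  rw [indWDensity, hE, finsum_mem_coe_finset, inducedWeight]

lemma inducedWeight_nonneg (hw : ∀ e, 0 ≤ w e) (S : Finset V) : 0 ≤ G.inducedWeight w S :=
  sum_nonneg fun e _ => hw e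

lemma inducedWeight_mono (hw : ∀ e, 0 ≤ w e) {S T : Finset V} (h : S ⊆ T) :
    G.inducedWeight w S ≤ G.inducedWeight w T :=
  sum_le_sum_of_subset_of_nonneg (filter_subset_filter _ (sym2_mono h)) fun e _ _ => hw e

lemma finsum_edgeSet_le_inducedWeight (hw : ∀ e, 0 ≤ w e) (H : G.Subgraph) {S : Finset V}
    (hS : H.verts ⊆ S) : ∑ᶠ e ∈ H.edgeSet, w e ≤ G.inducedWeight w S := by
  have hE : H.edgeSet ⊆ G.inducedEdges S := fun e he =>
    mem_inducedEdges.2 ⟨H.edgeSet_subset he, fun v hv => hS (H.mem_verts_of_mem_edge he hv)⟩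
  rw [finsum_mem_eq_finite_toFinset_sum _ ((G.inducedEdges S).finite_toSet.subset hE)]
  exact sum_le_sum_of_subset_of_nonneg (fun e he => hE ((Set.Finite.mem_toFinset _).1 he))
    fun e _ _ => hw e

lemma maxKWDensity_le_of_forall_inducedWeight_le [Fintype V] (hw : ∀ e, 0 ≤ w e) {k : ℕ} {S : Finset V}
    (hmax : ∀ T : Finset V, T.card = k → G.inducedWeight w T ≤ G.inducedWeight w S) :
    maxKWDensity G w k ≤ 2 * G.inducedWeight w S / k := by
  refine Real.sSup_le ?_ (by have := inducedWeight_nonneg (G := G) hw S; positivity)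
  rintro _ ⟨H, hHk, rfl⟩
  have hfin : H.verts.Finite := Set.toFinite _
  have hcard : hfin.toFinset.card = k := by rw [← hHk, Set.ncard_eq_toFinset_card _ hfin]
  rw [subWDensity, hHk]
  gcongr
  exact (finsum_edgeSet_le_inducedWeight hw H (by simp)).trans (hmax _ hcard)

variable [DecidableEq V]

lemma sum_sum_incident_eq_two_mul_inducedWeight (S : Finset V) :
    ∑ v ∈ S, ∑ e ∈ G.inducedEdges S with v ∈ e, w e = 2 * G.inducedWeight w S := by
  rw [sum_comm' (t' := G.inducedEdges S) (s' := fun e => e.toFinset)]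
  · rw [inducedWeight, mul_sum]
    refine sum_congr rfl fun e he => ?_
    rw [sum_const, Sym2.card_toFinset_of_not_isDiag _
      (G.not_isDiag_of_mem_edgeSet (mem_inducedEdges.1 he).1), two_nsmul, two_mul]
  · intro v e
    simp only [mem_filter, Sym2.mem_toFinset]
    exact ⟨fun ⟨_, he, hv⟩ => ⟨hv, he⟩,
      fun ⟨hv, he⟩ => ⟨(mem_inducedEdges.1 he).2 v hv, he, hv⟩⟩

lemma sum_incident_le_inducedWeight_closedNbhdWithin (hw : ∀ e, 0 ≤ w e) (S : Finset V) (v : V) :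
    ∑ e ∈ G.inducedEdges S with v ∈ e, w e ≤ G.inducedWeight w (G.closedNbhdWithin S v) := by
  refine sum_le_sum_of_subset_of_nonneg (fun e he => ?_) fun e _ _ => hw e
  obtain ⟨he, hv⟩ := mem_filter.1 he
  obtain ⟨u, rfl⟩ := Sym2.mem_iff_exists.1 hv
  obtain ⟨hadj, hS⟩ := mem_inducedEdges.1 he
  refine mem_inducedEdges.2 ⟨hadj, fun x hx => ?_⟩
  rcases Sym2.mem_iff.1 hx with rfl | rfl
  · exact mem_insert_self _ _
  · exact mem_insert_of_mem (mem_filter.2 ⟨hS x (Sym2.mem_mk_right _ _), hadj⟩)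

lemma exists_inducedWeight_closedNbhdWithin_ge (hw : ∀ e, 0 ≤ w e) {S : Finset V}
    (hS : S.Nonempty) : ∃ v ∈ S,
      2 * G.inducedWeight w S / S.card ≤ G.inducedWeight w (G.closedNbhdWithin S v) := by
  have hcard : (S.card : ℝ) ≠ 0 := by exact_mod_cast hS.card_pos.ne'
  obtain ⟨v, hv, hle⟩ := exists_le_of_sum_le hS (f := fun _ => 2 * G.inducedWeight w S / S.card)
    (g := fun v => ∑ e ∈ G.inducedEdges S with v ∈ e, w e) (by
      rw [sum_sum_incident_eq_two_mul_inducedWeight, sum_const, nsmul_eq_mul, mul_div_cancel₀ _ hcard])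
  exact ⟨v, hv, hle.trans (sum_incident_le_inducedWeight_closedNbhdWithin hw S v)⟩

lemma closedNbhdWithin_subset {S : Finset V} {v : V} (hv : v ∈ S) :
    G.closedNbhdWithin S v ⊆ S :=
  insert_subset hv (filter_subset _ _)

lemma induce_closedNbhdWithin_connected (S : Finset V) (v : V) :
    (G.induce (G.closedNbhdWithin S v : Set V)).Connected := by
  have hv : v ∈ G.closedNbhdWithin S v := mem_insert_self _ _
  refine (connected_iff_exists_forall_reachable _).2 ⟨⟨v, hv⟩, ?_⟩
  rintro ⟨u, hu⟩
  rcases mem_insert.1 hu with rfl | hu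
  · rfl
  · exact Adj.reachable (G := G.induce _) (mem_filter.1 hu).2

end InducedWeight

section Growing

variable {G : SimpleGraph V}

lemma Connected.exists_induce_insert_connected (hG : G.Connected) {s : Set V}
    (hs : (G.induce s).Connected) {u : V} (hu : u ∉ s) :
    ∃ x ∉ s, (G.induce (insert x s)).Connected := by
  obtain ⟨⟨a, ha⟩⟩ := hs.nonempty
  obtain ⟨p⟩ := hG.preconnected a u
  obtain ⟨d, -, hd₁, hd₂⟩ := p.exists_boundary_dart s ha hu
  refine ⟨d.snd, hd₂, ?_⟩
  rw [← Set.union_singleton]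
  exact connected_induce_union hs.preconnected Preconnected.of_subsingleton hd₁ rfl d.adj

lemma Connected.exists_induce_connected_superset_card [Fintype V] [DecidableEq V]
    (hG : G.Connected) {S : Finset V} (hS : (G.induce (S : Set V)).Connected) {m : ℕ}
    (hSm : S.card ≤ m) (hm : m ≤ Fintype.card V) :
    ∃ T : Finset V, S ⊆ T ∧ T.card = m ∧ (G.induce (T : Set V)).Connected := by
  induction m, hSm using Nat.le_induction with
  | base => exact ⟨S, subset_rfl, rfl, hS⟩
  | succ m _ ih =>
    obtain ⟨T, hST, rfl, hT⟩ := ih (by omega)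
    obtain ⟨u, hu⟩ : ∃ u, u ∉ T := by
      by_contra! h
      have := card_le_card (show univ ⊆ T from fun x _ => h x)
      rw [card_univ] at this
      omega
    obtain ⟨x, hx, hxT⟩ := hG.exists_induce_insert_connected hT (mem_coe.not.2 hu)
    exact ⟨insert x T, hST.trans (subset_insert _ _), card_insert_of_notMem hx,
      by rwa [coe_insert]⟩

end Growing

end SimpleGraph

theorem stmt16_general [Fintype V] (G : SimpleGraph V)
    (hG : G.Connected) (w : Sym2 V → ℝ) (hw : ∀ e, 0 ≤ w e)
    (k : ℕ) (hk2 : 2 ≤ k) (hkn : k ≤ Fintype.card V) :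
    ∃ S : Finset V, S.card = k ∧ (G.induce (S : Set V)).Connected ∧
      indWDensity G w S ≥ (2 / (k : ℝ)) * maxKWDensity G w k := by
  classical
  obtain ⟨S, hSk, hSmax⟩ := exists_max_image (powersetCard k univ) (G.inducedWeight w)
    (powersetCard_nonempty.2 (by simpa using hkn))
  rw [mem_powersetCard_univ] at hSk
  obtain ⟨v, hv, hvS⟩ := SimpleGraph.exists_inducedWeight_closedNbhdWithin_ge (G := G) hw
    (card_pos.1 (by omega : 0 < S.card))
  have hsub := SimpleGraph.closedNbhdWithin_subset (G := G) hv
  obtain ⟨T, hNT, hTk, hT⟩ := hG.exists_induce_connected_superset_card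
    (SimpleGraph.induce_closedNbhdWithin_connected (G := G) S v) (hSk ▸ card_le_card hsub) hkn
  refine ⟨T, hTk, hT, ?_⟩
  rw [ge_iff_le, SimpleGraph.indWDensity_eq_inducedWeight, hTk]
  rw [hSk] at hvS
  calc 2 / (k : ℝ) * maxKWDensity G w k
      ≤ 2 / k * (2 * G.inducedWeight w S / k) := by
        gcongr
        exact SimpleGraph.maxKWDensity_le_of_forall_inducedWeight_le hw fun T hT =>
          hSmax T (mem_powersetCard_univ.2 hT)
    _ ≤ 2 / k * G.inducedWeight w T := by
        gcongr
        exact hvS.trans (SimpleGraph.inducedWeight_mono hw hNT)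
    _ = 2 * G.inducedWeight w T / k := by ring

/-- greedy gives a connected `k`-subgraph of weighted density at least
`(2/k)·σ*_{k,w}(G)`. -/
theorem stmt16 [Fintype V] [DecidableEq V] (G : SimpleGraph V)
    (hG : G.Connected) (w : Sym2 V → ℝ) (hw : ∀ e, 0 ≤ w e)
    (k : ℕ) (hk2 : 2 ≤ k) (hkn : k ≤ Fintype.card V) :
    ∃ S : Finset V, S.card = k ∧ (G.induce (S : Set V)).Connected ∧
      indWDensity G w S ≥ (2 / (k : ℝ)) * maxKWDensity G w k :=
  stmt16_general G hG w hw k hk2 hkn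
end
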